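/- arXiv:1504.03094 — 7 statements merged into one kernel-verified Lean document; each statement's English description precedes it below -/
import Mathlib

section
/- Let k ≥ 2 and let G be a semigroup (under composition) generated by holomorphic endomorphisms of ℂ^k each of maximal generic rank k. Then for every φ ∈ G, writing Σ_φ = {z ∈ ℂ^k : det Dφ(z) = 0}, one has φ(F(G) \ Σ_φ) ⊆ F(G), where F(G) is the Fatou set of G. -/
open Set Filter Metric Topology

noncomputable section

/-- `ℂ^k`. -/
abbrev Ck (k : ℕ) := Fin k → ℂ

/-- The semigroup (under composition) generated by a set `S` of self-maps. -/
inductive SemigroupGen {α : Type*} (S : Set (α → α)) : (α → α) → Prop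
  | base {f : α → α} : f ∈ S → SemigroupGen S f
  | comp {f g : α → α} : SemigroupGen S f → SemigroupGen S g → SemigroupGen S (f ∘ g)

/-- The semigroup generated by `S`, as a set of maps. -/
def GenSet {α : Type*} (S : Set (α → α)) : Set (α → α) := {f | SemigroupGen S f}

/-- A sequence of maps diverges uniformly to infinity on compact subsets of `U`. -/
def DivergesUniformlyOn {k : ℕ} (f : ℕ → Ck k → Ck k) (U : Set (Ck k)) : Prop :=
  ∀ K ⊆ U, IsCompact K → ∀ R > (0 : ℝ), ∀ᶠ n in atTop, ∀ z ∈ K, R < ‖f n z‖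

/-- The Fatou set of a family `G` of self-maps of `ℂ^k`: points having an open
neighbourhood on which every sequence in `G` admits a subsequence that either converges
uniformly on compact subsets or diverges uniformly to infinity on compact subsets. -/
def FatouSet {k : ℕ} (G : Set (Ck k → Ck k)) : Set (Ck k) :=
  {z | ∃ U : Set (Ck k), IsOpen U ∧ z ∈ U ∧
    ∀ f : ℕ → Ck k → Ck k, (∀ n, f n ∈ G) →
      ∃ s : ℕ → ℕ, StrictMono s ∧
        ((∃ g : Ck k → Ck k, TendstoLocallyUniformlyOn (fun n => f (s n)) g atTop U) ∨
          DivergesUniformlyOn (fun n => f (s n)) U)}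

/-- The Julia set of a family `G`. -/
def JuliaSet {k : ℕ} (G : Set (Ck k → Ck k)) : Set (Ck k) := (FatouSet G)ᶜ

/-- The complex Jacobian determinant of `f` at `z`. -/
def jacDet {k : ℕ} (f : Ck k → Ck k) (z : Ck k) : ℂ :=
  LinearMap.det ((fderiv ℂ f z).toLinearMap)

/-- `Ω` is a connected component of the Fatou set of `G`. -/
def IsFatouComponent {k : ℕ} (G : Set (Ck k → Ck k)) (Ω : Set (Ck k)) : Prop :=
  ∃ z ∈ FatouSet G, Ω = connectedComponentIn (FatouSet G) z

/-- The family `G` is locally uniformly bounded on `Ω`. -/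
def LocUnifBounded {k : ℕ} (G : Set (Ck k → Ck k)) (Ω : Set (Ck k)) : Prop :=
  ∀ z ∈ Ω, ∃ V ⊆ Ω, IsOpen V ∧ z ∈ V ∧ ∃ M > (0 : ℝ), ∀ f ∈ G, ∀ w ∈ V, ‖f w‖ < M

/-- The polynomial hull of a set `K ⊆ ℂ^k`. -/
def polyHull {k : ℕ} (K : Set (Ck k)) : Set (Ck k) :=
  {z | ∀ P : MvPolynomial (Fin k) ℂ,
    ‖MvPolynomial.eval z P‖ ≤ sSup ((fun w => ‖MvPolynomial.eval w P‖) '' K)}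

/-- A Fatou component `Ω` of `G` is recurrent. -/
def Recurrent {k : ℕ} (G : Set (Ck k → Ck k)) (Ω : Set (Ck k)) : Prop :=
  ∀ g : ℕ → Ck k → Ck k, (∀ j, g j ∈ G) →
    ∃ s : ℕ → ℕ, StrictMono s ∧ ∃ p ∈ Ω, ∃ p0 ∈ Ω,
      Tendsto (fun m => g (s m) p) atTop (𝓝 p0)

/-- A holomorphic automorphism of `ℂ^k`. -/
def IsHoloAut {k : ℕ} (f : Ck k → Ck k) : Prop :=
  Differentiable ℂ f ∧ ∃ g : Ck k → Ck k, Differentiable ℂ g ∧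
    Function.LeftInverse g f ∧ Function.RightInverse g f

/-- An upper triangular polynomial automorphism of `ℂ^k`: the `j`-th coordinate is
`a j * z j + h j (z_1, …, z_{j-1})` with `a j ≠ 0` and `h j` a polynomial in the
first `j - 1` variables. -/
def IsUpperTriangularAut {k : ℕ} (T : Ck k → Ck k) : Prop :=
  ∃ (a : Fin k → ℂ) (h : Fin k → MvPolynomial (Fin k) ℂ),
    (∀ j, a j ≠ 0) ∧ (∀ j, ∀ i ∈ (h j).vars, i < j) ∧
    ∀ z j, T z j = a j * z j + MvPolynomial.eval z (h j)

/-! Near a point `z` with `det Dφ(z) ≠ 0`, the inverse function theorem makes `φ` a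
homeomorphism from a neighbourhood of `z`, inside a neighbourhood `U` on which `G` is normal,
onto an open neighbourhood `V` of `φ z`. Given a sequence `fₙ` in `G`, the maps `fₙ ∘ φ` lie in
`G`, so a subsequence converges or diverges locally uniformly on `U`; composing with the local
inverse of `φ` transfers this to `fₙ` on `V`. The inverse function theorem needs `Dφ` to be
continuous, which for holomorphic maps follows from Cauchy estimates on complex lines. -/

section Holomorphic

variable {E F : Type*} [NormedAddCommGroup E] [NormedSpace ℂ E]
  [NormedAddCommGroup F] [NormedSpace ℂ F]

theorem Complex.norm_fderiv_apply_le {h : E → F} (hd : Differentiable ℂ h) {x v : E} {M : ℝ}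
    (hM : ∀ t : ℂ, ‖t‖ = 1 → ‖h (x + t • v)‖ ≤ M) : ‖fderiv ℂ h x v‖ ≤ M := by
  have hline : Differentiable ℂ fun t : ℂ => x + t • v :=
    (differentiable_id.smul_const v).const_add x
  have hderiv : HasDerivAt (fun t : ℂ => h (x + t • v)) (fderiv ℂ h x v) 0 := by
    simpa [Function.comp_def] using (hd (x + (0 : ℂ) • v)).hasFDerivAt.comp_hasDerivAt 0
      (((hasDerivAt_id (0 : ℂ)).smul_const v).const_add x)
  simpa only [Function.comp_def, hderiv.deriv, div_one] using
    Complex.norm_deriv_le_of_forall_mem_sphere_norm_le (c := 0) one_pos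
      (hd.comp hline).diffContOnCl fun t ht => hM t (by simpa using ht)

theorem Complex.continuous_fderiv [ProperSpace E] {φ : E → F} (hd : Differentiable ℂ φ) :
    Continuous (fderiv ℂ φ) := by
  rw [Metric.continuous_iff]
  intro z ε hε
  obtain ⟨δ, hδ, hφδ⟩ := Metric.uniformContinuousOn_iff.1
    ((isCompact_closedBall z 2).uniformContinuousOn_of_continuous hd.continuous.continuousOn)
    (ε / 2) (half_pos hε)
  refine ⟨min δ 1, lt_min hδ one_pos, fun w hw => ?_⟩
  have hwz : dist w z < δ ∧ dist w z < 1 := lt_min_iff.1 hw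
  have hunit : ∀ v : E, ‖v‖ = 1 → ‖(fderiv ℂ φ w - fderiv ℂ φ z) v‖ ≤ ε / 2 := by
    intro v hv
    -- `Dφ(w) - Dφ(z)` is the derivative at `z` of `y ↦ φ (y + (w - z)) - φ y`, which is
    -- smaller than `ε / 2` on the unit sphere around `z` by uniform continuity of `φ`.
    have hshift : Differentiable ℂ fun y => φ (y + (w - z)) :=
      hd.comp (differentiable_id.add_const _)
    have hfd : fderiv ℂ (fun y => φ (y + (w - z)) - φ y) z = fderiv ℂ φ w - fderiv ℂ φ z := by
      rw [fderiv_fun_sub (hshift z) (hd z), fderiv_comp_add_right, add_sub_cancel]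
    rw [← hfd]
    refine Complex.norm_fderiv_apply_le (hshift.fun_sub hd) fun t ht => ?_
    have htv : ‖t • v‖ = 1 := by rw [norm_smul, ht, hv, one_mul]
    rw [← dist_eq_norm]
    refine (hφδ _ ?_ _ ?_ ?_).le
    · rw [mem_closedBall, dist_eq_norm, add_sub_right_comm, add_sub_cancel_left]
      calc ‖t • v + (w - z)‖ ≤ ‖t • v‖ + ‖w - z‖ := norm_add_le _ _
        _ ≤ 2 := by rw [htv, ← dist_eq_norm]; linarith [hwz.2]
    · rw [mem_closedBall, dist_eq_norm, add_sub_cancel_left, htv]; norm_num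
    · simpa [dist_eq_norm] using hwz.1
  rw [dist_eq_norm]
  exact ((fderiv ℂ φ w - fderiv ℂ φ z).opNorm_le_of_unit_norm (half_pos hε).le hunit).trans_lt
    (half_lt_self hε)

theorem Differentiable.exists_openPartialHomeomorph_of_det_fderiv_ne_zero
    [FiniteDimensional ℂ E] {φ : E → E} (hd : Differentiable ℂ φ) {z : E}
    (hz : (fderiv ℂ φ z).det ≠ 0) :
    ∃ e : OpenPartialHomeomorph E E, z ∈ e.source ∧ ⇑e = φ := by
  have hstrict : HasStrictFDerivAt φ
      ((fderiv ℂ φ z).toContinuousLinearEquivOfDetNeZero hz : E →L[ℂ] E) z := by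
    rw [ContinuousLinearMap.coe_toContinuousLinearEquivOfDetNeZero]
    exact hasStrictFDerivAt_of_hasFDerivAt_of_continuousAt
      (.of_forall fun y => (hd y).hasFDerivAt) (Complex.continuous_fderiv hd).continuousAt
  exact ⟨hstrict.toOpenPartialHomeomorph φ, hstrict.mem_toOpenPartialHomeomorph_source, rfl⟩

end Holomorphic

theorem SemigroupGen.differentiable {k : ℕ} {S : Set (Ck k → Ck k)}
    (hS : ∀ f ∈ S, Differentiable ℂ f) {φ : Ck k → Ck k} (hφ : SemigroupGen S φ) :
    Differentiable ℂ φ := by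
  induction hφ with
  | base hf => exact hS _ hf
  | comp _ _ ihf ihg => exact ihf.comp ihg

section Fatou

variable {k : ℕ}

def IsNormalOn (G : Set (Ck k → Ck k)) (U : Set (Ck k)) : Prop :=
  ∀ f : ℕ → Ck k → Ck k, (∀ n, f n ∈ G) →
    ∃ s : ℕ → ℕ, StrictMono s ∧
      ((∃ g : Ck k → Ck k, TendstoLocallyUniformlyOn (fun n => f (s n)) g atTop U) ∨
        DivergesUniformlyOn (fun n => f (s n)) U)

theorem mem_fatouSet_iff {G : Set (Ck k → Ck k)} {z : Ck k} :
    z ∈ FatouSet G ↔ ∃ U, IsOpen U ∧ z ∈ U ∧ IsNormalOn G U :=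
  Iff.rfl

theorem DivergesUniformlyOn.comp {f : ℕ → Ck k → Ck k} {U V : Set (Ck k)}
    (hf : DivergesUniformlyOn f U) {ψ : Ck k → Ck k} (hψ : MapsTo ψ V U) (hψc : ContinuousOn ψ V) :
    DivergesUniformlyOn (fun n => f n ∘ ψ) V := by
  intro K hKV hK R hR
  filter_upwards [hf (ψ '' K) (hψ.mono_left hKV).image_subset (hK.image_of_continuousOn
    (hψc.mono hKV)) R hR] with n hn z hz
  exact hn (ψ z) (mem_image_of_mem ψ hz)

theorem DivergesUniformlyOn.congr {f g : ℕ → Ck k → Ck k} {U : Set (Ck k)}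
    (hf : DivergesUniformlyOn f U) (hfg : ∀ n, EqOn (f n) (g n) U) :
    DivergesUniformlyOn g U := by
  intro K hKU hK R hR
  filter_upwards [hf K hKU hK R hR] with n hn z hz
  rw [← hfg n (hKU hz)]
  exact hn z hz

theorem IsNormalOn.target {G : Set (Ck k → Ck k)} {U : Set (Ck k)} (hU : IsNormalOn G U)
    (e : OpenPartialHomeomorph (Ck k) (Ck k)) (heU : e.source ⊆ U) (hG : ∀ f ∈ G, f ∘ e ∈ G) :
    IsNormalOn G e.target := by
  intro f hf
  have hmaps : MapsTo e.symm e.target U := fun v hv => heU (e.map_target hv)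
  have hback : ∀ n, EqOn (f n ∘ e ∘ e.symm) (f n) e.target := fun n v hv => by
    simp only [Function.comp_apply, e.right_inv hv]
  obtain ⟨s, hs, hconv | hdiv⟩ := hU (fun n => f n ∘ e) fun n => hG _ (hf n)
  · obtain ⟨g, hg⟩ := hconv
    exact ⟨s, hs, .inl ⟨g ∘ e.symm, (hg.comp e.symm hmaps e.continuousOn_symm).congr
      fun n => hback (s n)⟩⟩
  · exact ⟨s, hs, .inr ((hdiv.comp hmaps e.continuousOn_symm).congr fun n => hback (s n))⟩

theorem apply_mem_fatouSet {G : Set (Ck k → Ck k)} {z : Ck k} (hz : z ∈ FatouSet G)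
    (e : OpenPartialHomeomorph (Ck k) (Ck k)) (hze : z ∈ e.source) (hG : ∀ f ∈ G, f ∘ e ∈ G) :
    e z ∈ FatouSet G := by
  obtain ⟨U, hUo, hzU, hU⟩ := mem_fatouSet_iff.1 hz
  let e' := e.restrOpen U hUo
  exact ⟨e'.target, e'.open_target, e'.map_source ⟨hze, hzU⟩,
    hU.target e' inter_subset_right hG⟩

end Fatou

theorem stmt_0_general {k : ℕ} (S : Set (Ck k → Ck k))
    (hhol : ∀ f ∈ S, Differentiable ℂ f)
    (φ : Ck k → Ck k) (hφ : φ ∈ GenSet S) :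
    φ '' (FatouSet (GenSet S) \ {z | jacDet φ z = 0}) ⊆ FatouSet (GenSet S) := by
  rintro _ ⟨z, ⟨hzF, hzJ⟩, rfl⟩
  obtain ⟨e, hze, rfl⟩ :=
    (SemigroupGen.differentiable hhol hφ).exists_openPartialHomeomorph_of_det_fderiv_ne_zero hzJ
  exact apply_mem_fatouSet hzF e hze fun f hf => SemigroupGen.comp hf hφ

/-- If `G` is a semigroup generated by holomorphic endomorphisms of `ℂ^k` of maximal
generic rank `k`, then for every `φ ∈ G`, `φ(F(G) \ Σ_φ) ⊆ F(G)`. -/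
theorem stmt_0 {k : ℕ} (hk : 2 ≤ k) (S : Set (Ck k → Ck k))
    (hhol : ∀ f ∈ S, Differentiable ℂ f)
    (hrank : ∀ f ∈ S, ∃ z, jacDet f z ≠ 0)
    (φ : Ck k → Ck k) (hφ : φ ∈ GenSet S) :
    φ '' (FatouSet (GenSet S) \ {z | jacDet φ z = 0}) ⊆ FatouSet (GenSet S) :=
  stmt_0_general S hhol φ hφ
end
end

section
/- Let k ≥ 2 and let φ_1, …, φ_m be proper holomorphic endomorphisms of ℂ^k that pairwise commute (φ_i ∘ φ_j = φ_j ∘ φ_i for all i, j). For an m-tuple l = (l_1, …, l_m) of positive integers let G_l = ⟨φ_1^{l_1}, …, φ_m^{l_m}⟩ be the semigroup generated by the indicated iterates. Then for any two m-tuples p and q of positive integers, F(G_p) = F(G_q) and J(G_p) = J(G_q). -/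
open Set Filter Metric Topology

noncomputable section

/-
Every element of `⟨φ_1, …, φ_m⟩` is, by commutativity, a product `φ^a = φ_1^{a_1} ∘ ⋯ ∘ φ_m^{a_m}`,
and writing `a = c + l b` with `0 ≤ c_i < l_i` gives `φ^a = φ^c ∘ g` with `g ∈ G_l` or `g = id`.
So `⟨φ_1, …, φ_m⟩` is covered by finitely many families `{φ^c} ∪ φ^c ∘ G_l`. Normality passes to
post-compositions with a proper map, to finite unions (pigeonhole on subsequences) and to subfamilies,
hence `F(G_l) = F(⟨φ_1, …, φ_m⟩)` for every `l`.
-/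

section Iterates

variable {α : Type*} {m : ℕ}

def iterateAlong (ψ : Fin m → α → α) (a : Fin m → ℕ) : List (Fin m) → α → α
  | [] => id
  | i :: L => (ψ i)^[a i] ∘ iterateAlong ψ a L

def multiIterate (ψ : Fin m → α → α) (a : Fin m → ℕ) : α → α :=
  iterateAlong ψ a (List.finRange m)

variable {ψ : Fin m → α → α}

theorem iterateAlong_eq_id {a : Fin m → ℕ} :
    ∀ {L : List (Fin m)}, (∀ i ∈ L, a i = 0) → iterateAlong ψ a L = id
  | [], _ => rfl
  | i :: L, h => by
    rw [iterateAlong, h i List.mem_cons_self,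
      iterateAlong_eq_id fun j hj => h j (List.mem_cons_of_mem i hj)]
    rfl

theorem multiIterate_zero : multiIterate ψ 0 = id :=
  iterateAlong_eq_id fun _ _ => rfl

theorem iterateAlong_induction (P : (α → α) → Prop) (hid : P id)
    (hcomp : ∀ f g, P f → P g → P (f ∘ g)) (hψ : ∀ i, P (ψ i)) (a : Fin m → ℕ) :
    ∀ L, P (iterateAlong ψ a L)
  | [] => hid
  | i :: L => by
    have hiter : ∀ n, P (ψ i)^[n] := by
      intro n
      induction n with
      | zero => exact hid
      | succ n ih => rw [Function.iterate_succ]; exact hcomp _ _ ih (hψ i)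
    exact hcomp _ _ (hiter (a i)) (iterateAlong_induction P hid hcomp hψ a L)

theorem Function.Commute.iterateAlong_right {f : α → α} (hf : ∀ i, Function.Commute f (ψ i))
    (a : Fin m → ℕ) : ∀ L, Function.Commute f (iterateAlong ψ a L)
  | [] => fun _ => rfl
  | i :: L => ((hf i).iterate_right (a i)).comp_right (iterateAlong_right hf a L)

theorem iterateAlong_add (hc : ∀ i j, Function.Commute (ψ i) (ψ j)) (a b : Fin m → ℕ) :
    ∀ L, iterateAlong ψ (a + b) L = iterateAlong ψ a L ∘ iterateAlong ψ b L
  | [] => rfl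
  | i :: L => by
    have hcomm : Function.Commute (ψ i)^[b i] (iterateAlong ψ a L) :=
      Function.Commute.iterateAlong_right (fun j => (hc i j).iterate_left (b i)) a L
    funext x
    simp only [iterateAlong, Function.comp_apply, Pi.add_apply, Function.iterate_add_apply,
      iterateAlong_add hc a b L, hcomm.eq]

theorem iterateAlong_mul (t b : Fin m → ℕ) :
    ∀ L, iterateAlong ψ (fun i => t i * b i) L = iterateAlong (fun i => (ψ i)^[t i]) b L
  | [] => rfl
  | i :: L => by
    rw [iterateAlong, iterateAlong, Function.iterate_mul, iterateAlong_mul t b L]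

theorem iterateAlong_single (i : Fin m) (n : ℕ) :
    ∀ {L : List (Fin m)}, L.Nodup → i ∈ L → iterateAlong ψ (Pi.single i n) L = (ψ i)^[n]
  | j :: L, hnd, hi => by
    obtain ⟨hjL, hndL⟩ := List.nodup_cons.mp hnd
    rcases List.mem_cons.mp hi with rfl | hiL
    · rw [iterateAlong, Pi.single_eq_same, iterateAlong_eq_id fun j hj =>
        Pi.single_eq_of_ne (M := fun _ => ℕ) (show j ≠ i by rintro rfl; exact hjL hj) n, Function.comp_id]
    · rw [iterateAlong, Pi.single_eq_of_ne (M := fun _ => ℕ) (show j ≠ i by rintro rfl; exact hjL hiL) n,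
        iterateAlong_single i n hndL hiL, Function.iterate_zero, Function.id_comp]

theorem multiIterate_single (i : Fin m) : multiIterate ψ (Pi.single i 1) = ψ i := by
  rw [multiIterate, iterateAlong_single i 1 (List.nodup_finRange m) (List.mem_finRange i),
    Function.iterate_one]

theorem multiIterate_add (hc : ∀ i j, Function.Commute (ψ i) (ψ j)) (a b : Fin m → ℕ) :
    multiIterate ψ (a + b) = multiIterate ψ a ∘ multiIterate ψ b :=
  iterateAlong_add hc a b _

theorem multiIterate_eq_comp_div (hc : ∀ i j, Function.Commute (ψ i) (ψ j)) (a t : Fin m → ℕ) :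
    multiIterate ψ a = multiIterate ψ (fun i => a i % t i) ∘
      multiIterate (fun i => (ψ i)^[t i]) (fun i => a i / t i) := by
  have ha : a = (fun i => a i % t i) + fun i => t i * (a i / t i) :=
    funext fun i => (Nat.mod_add_div (a i) (t i)).symm
  conv_lhs => rw [ha, multiIterate_add hc]
  exact congrArg _ (iterateAlong_mul t _ _)

end Iterates

section Semigroup

variable {α : Type*}

theorem genSet_induction {S : Set (α → α)} (P : (α → α) → Prop)
    (hcomp : ∀ f g, P f → P g → P (f ∘ g)) (hS : ∀ f ∈ S, P f) : ∀ f ∈ GenSet S, P f := by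
  intro f hf
  induction hf with
  | base h => exact hS _ h
  | comp _ _ ihf ihg => exact hcomp _ _ ihf ihg

theorem genSet_subset_genSet {S S' : Set (α → α)} (h : S' ⊆ GenSet S) : GenSet S' ⊆ GenSet S :=
  genSet_induction (· ∈ GenSet S) (fun _ _ => SemigroupGen.comp) h

theorem iterate_mem_genSet {S : Set (α → α)} {f : α → α} (hf : f ∈ S) :
    ∀ {n : ℕ}, n ≠ 0 → f^[n] ∈ GenSet S
  | 1, _ => SemigroupGen.base hf
  | n + 2, _ => by
    rw [Function.iterate_succ]
    exact SemigroupGen.comp (iterate_mem_genSet hf n.succ_ne_zero) (SemigroupGen.base hf)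

variable {m : ℕ} {ψ : Fin m → α → α}

theorem iterateAlong_mem_genSet {a : Fin m → ℕ} :
    ∀ {L : List (Fin m)}, (∃ i ∈ L, a i ≠ 0) → iterateAlong ψ a L ∈ GenSet (range ψ)
  | i :: L, ⟨j, hj, hja⟩ => by
    by_cases hL : ∃ j ∈ L, a j ≠ 0
    · by_cases hi : a i = 0
      · rw [iterateAlong, hi, Function.iterate_zero, Function.id_comp]
        exact iterateAlong_mem_genSet hL
      · exact SemigroupGen.comp (iterate_mem_genSet (mem_range_self i) hi)
          (iterateAlong_mem_genSet hL)
    · push Not at hL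
      have hi : a i ≠ 0 := by
        rcases List.mem_cons.mp hj with rfl | hjL
        exacts [hja, absurd (hL j hjL) hja]
      rw [iterateAlong, iterateAlong_eq_id hL, Function.comp_id]
      exact iterate_mem_genSet (mem_range_self i) hi

theorem multiIterate_mem_genSet {a : Fin m → ℕ} (ha : a ≠ 0) :
    multiIterate ψ a ∈ GenSet (range ψ) := by
  obtain ⟨i, hi⟩ := Function.ne_iff.mp ha
  exact iterateAlong_mem_genSet ⟨i, List.mem_finRange i, hi⟩

theorem exists_multiIterate_eq_of_mem_genSet (hc : ∀ i j, Function.Commute (ψ i) (ψ j))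
    {f : α → α} (hf : f ∈ GenSet (range ψ)) : ∃ a, multiIterate ψ a = f := by
  induction hf with
  | base h =>
    obtain ⟨i, rfl⟩ := h
    exact ⟨Pi.single i 1, multiIterate_single i⟩
  | comp _ _ ihf ihg =>
    obtain ⟨a, rfl⟩ := ihf
    obtain ⟨b, rfl⟩ := ihg
    exact ⟨a + b, multiIterate_add hc a b⟩

theorem genSet_iterate_subset {t : Fin m → ℕ} (ht : ∀ i, 0 < t i) :
    GenSet (range fun i => (ψ i)^[t i]) ⊆ GenSet (range ψ) :=
  genSet_subset_genSet <| range_subset_iff.mpr fun i =>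
    iterate_mem_genSet (mem_range_self i) (ht i).ne'

theorem genSet_subset_iUnion_insert_comp (hc : ∀ i j, Function.Commute (ψ i) (ψ j))
    {t : Fin m → ℕ} (ht : ∀ i, 0 < t i) :
    GenSet (range ψ) ⊆ ⋃ c : (i : Fin m) → Fin (t i),
      insert (multiIterate ψ fun i => c i)
        ((multiIterate ψ (fun i => c i) ∘ ·) '' GenSet (range fun i => (ψ i)^[t i])) := by
  intro f hf
  obtain ⟨a, rfl⟩ := exists_multiIterate_eq_of_mem_genSet hc hf
  refine mem_iUnion.mpr ⟨fun i => ⟨a i % t i, Nat.mod_lt _ (ht i)⟩, ?_⟩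
  rw [multiIterate_eq_comp_div hc a t]
  by_cases hb : (fun i => a i / t i) = 0
  · left
    rw [hb, multiIterate_zero, Function.comp_id]
  · exact Or.inr ⟨_, multiIterate_mem_genSet hb, rfl⟩

end Semigroup

theorem Continuous.comp_tendstoLocallyUniformlyOn {ι α β γ : Type*} [TopologicalSpace α]
    [UniformSpace β] [UniformSpace γ] {F : ι → α → β} {f : α → β} {p : Filter ι} {s : Set α}
    {g : β → γ} (hg : Continuous g) (hF : TendstoLocallyUniformlyOn F f p s)
    (hf : ContinuousOn f s) : TendstoLocallyUniformlyOn (g ∘ F ·) (g ∘ f) p s := by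
  rw [tendstoLocallyUniformlyOn_iff_forall_tendsto] at hF ⊢
  intro x hx
  -- `(f y, F n y)` tends to the diagonal point `(f x, f x)`, which `g × g` preserves
  have hfx : Tendsto (fun y : ι × α => f y.2) (p ×ˢ 𝓝[s] x) (𝓝 (f x)) :=
    (hf x hx).tendsto.comp tendsto_snd
  have hpair : Tendsto (fun y : ι × α => (f y.2, F y.1 y.2)) (p ×ˢ 𝓝[s] x) (𝓝 (f x, f x)) :=
    hfx.prodMk_nhds (hfx.congr_uniformity (hF x hx))
  exact ((hg.prodMap hg).tendsto (f x, f x) |>.comp hpair).mono_right (nhds_le_uniformity _)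

section Normality

variable {k : ℕ}

variable {G G' : Set (Ck k → Ck k)} {U : Set (Ck k)}

theorem IsNormalOn.mono (h : IsNormalOn G U) (hG : G' ⊆ G) : IsNormalOn G' U :=
  fun f hf => h f fun n => hG (hf n)

theorem fatouSet_anti (hG : G' ⊆ G) : FatouSet G ⊆ FatouSet G' := by
  simp only [subset_def, mem_fatouSet_iff]
  exact fun _ ⟨U, hU, hzU, h⟩ => ⟨U, hU, hzU, h.mono hG⟩

theorem isNormalOn_singleton (g : Ck k → Ck k) : IsNormalOn {g} U := by
  intro f hf
  obtain rfl : f = fun _ => g := funext hf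
  refine ⟨id, strictMono_id, Or.inl ⟨g, ?_⟩⟩
  rw [tendstoLocallyUniformlyOn_iff_forall_tendsto]
  exact fun _ _ => tendsto_diag_uniformity _ _

theorem IsNormalOn.iUnion {ι : Type*} [Finite ι] {G : ι → Set (Ck k → Ck k)}
    (h : ∀ i, IsNormalOn (G i) U) : IsNormalOn (⋃ i, G i) U := by
  intro f hf
  choose j hj using fun n => mem_iUnion.mp (hf n)
  obtain ⟨i, hi⟩ := Finite.exists_infinite_fiber j
  obtain ⟨φ, hφ, hφi⟩ := extraction_of_frequently_atTop
    (Nat.frequently_atTop_iff_infinite.mpr (infinite_coe_iff.mp hi))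
  obtain ⟨s, hs, H⟩ := h i (fun n => f (φ n)) fun n => hφi n ▸ hj (φ n)
  exact ⟨φ ∘ s, hφ.comp hs, H⟩

theorem IsNormalOn.insert (h : IsNormalOn G U) (g : Ck k → Ck k) :
    IsNormalOn (insert g G) U := by
  rw [insert_eq, union_eq_iUnion]
  exact IsNormalOn.iUnion fun b => b.casesOn h (isNormalOn_singleton g)

theorem IsProperMap.comp_divergesUniformlyOn {r : Ck k → Ck k} (hr : IsProperMap r)
    {F : ℕ → Ck k → Ck k} (hF : DivergesUniformlyOn F U) :
    DivergesUniformlyOn (fun n => r ∘ F n) U := by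
  intro K hKU hK R hR
  obtain ⟨S, hS⟩ :=
    (hr.isCompact_preimage (isCompact_closedBall 0 R)).isBounded.subset_closedBall 0
  filter_upwards [hF K hKU hK (max S 1) (by positivity)] with n hn z hz
  by_contra! hle
  have hSz : ‖F n z‖ ≤ S := by simpa using hS (show F n z ∈ r ⁻¹' Metric.closedBall 0 R by simpa)
  linarith [hn z hz, le_max_left S 1]

theorem IsNormalOn.image_comp (h : IsNormalOn G U) (hG : ∀ g ∈ G, Continuous g)
    {r : Ck k → Ck k} (hr : IsProperMap r) : IsNormalOn ((r ∘ ·) '' G) U := by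
  intro f hf
  choose g hgG hgf using hf
  obtain ⟨s, hs, hconv | hdiv⟩ := h g hgG
  · obtain ⟨g₀, hg₀⟩ := hconv
    have hg₀c : ContinuousOn g₀ U :=
      hg₀.continuousOn (Frequently.of_forall fun n => (hG _ (hgG (s n))).continuousOn)
    refine ⟨s, hs, Or.inl ⟨r ∘ g₀, ?_⟩⟩
    simpa only [← hgf] using hr.continuous.comp_tendstoLocallyUniformlyOn hg₀ hg₀c
  · exact ⟨s, hs, Or.inr (by simpa only [← hgf] using hr.comp_divergesUniformlyOn hdiv)⟩

end Normality

theorem fatouSet_genSet_iterate_subset {k m : ℕ} {ψ : Fin m → Ck k → Ck k}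
    (hc : ∀ i j, Function.Commute (ψ i) (ψ j)) (hψ : ∀ i, IsProperMap (ψ i))
    {t : Fin m → ℕ} (ht : ∀ i, 0 < t i) :
    FatouSet (GenSet (range fun i => (ψ i)^[t i])) ⊆ FatouSet (GenSet (range ψ)) := by
  have hcont : ∀ g ∈ GenSet (range fun i => (ψ i)^[t i]), Continuous g :=
    genSet_induction _ (fun _ _ => Continuous.comp) <| forall_mem_range.mpr fun i =>
      (hψ i).continuous.iterate _
  have hproper : ∀ a, IsProperMap (multiIterate ψ a) := fun a =>
    iterateAlong_induction _ isProperMap_id (fun _ _ hf hg => hf.comp hg) hψ a _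
  simp only [subset_def, mem_fatouSet_iff]
  refine fun z ⟨U, hU, hzU, hnormal⟩ => ⟨U, hU, hzU, ?_⟩
  exact (IsNormalOn.iUnion fun c => ((hnormal.image_comp hcont (hproper _)).insert _)).mono
    (genSet_subset_iUnion_insert_comp hc ht)

theorem stmt_6_general {k m : ℕ} (φ : Fin m → Ck k → Ck k)
    (hprop : ∀ i, IsProperMap (φ i))
    (hcomm : ∀ i j, φ i ∘ φ j = φ j ∘ φ i)
    (p q : Fin m → ℕ) (hp : ∀ i, 0 < p i) (hq : ∀ i, 0 < q i) :
    FatouSet (GenSet (Set.range fun i => (φ i)^[p i])) =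
      FatouSet (GenSet (Set.range fun i => (φ i)^[q i])) ∧
    JuliaSet (GenSet (Set.range fun i => (φ i)^[p i])) =
      JuliaSet (GenSet (Set.range fun i => (φ i)^[q i])) := by
  have hc : ∀ i j, Function.Commute (φ i) (φ j) := fun i j => congrFun (hcomm i j)
  have hfatou : ∀ l : Fin m → ℕ, (∀ i, 0 < l i) →
      FatouSet (GenSet (range fun i => (φ i)^[l i])) = FatouSet (GenSet (range φ)) :=
    fun l hl => (fatouSet_genSet_iterate_subset hc hprop hl).antisymm
      (fatouSet_anti (genSet_iterate_subset hl))
  have hF := (hfatou p hp).trans (hfatou q hq).symm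
  exact ⟨hF, congrArg compl hF⟩

/-- For pairwise commuting proper holomorphic endomorphisms `φ_1, …, φ_m` of `ℂ^k`,
the Fatou and Julia sets of the semigroup `G_l = ⟨φ_1^{l_1}, …, φ_m^{l_m}⟩` do not
depend on the tuple `l` of positive integers. -/
theorem stmt_6 {k m : ℕ} (hk : 2 ≤ k) (φ : Fin m → Ck k → Ck k)
    (hhol : ∀ i, Differentiable ℂ (φ i))
    (hprop : ∀ i, IsProperMap (φ i))
    (hcomm : ∀ i j, φ i ∘ φ j = φ j ∘ φ i)
    (p q : Fin m → ℕ) (hp : ∀ i, 0 < p i) (hq : ∀ i, 0 < q i) :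
    FatouSet (GenSet (Set.range fun i => (φ i)^[p i])) =
      FatouSet (GenSet (Set.range fun i => (φ i)^[q i])) ∧
    JuliaSet (GenSet (Set.range fun i => (φ i)^[p i])) =
      JuliaSet (GenSet (Set.range fun i => (φ i)^[q i])) :=
  stmt_6_general φ hprop hcomm p q hp hq
end
end

section
/- Let a ∈ ℂ with |a| > 1, let f(z_1, z_2) = (z_1^2, z_2^2) and g(z_1, z_2) = (z_1^2/a, z_2^2), and let G = ⟨f, g⟩ be the semigroup they generate. Then the Julia set of G is J(G) = ({z_1 : |z_1| ≤ 1} × {z_2 : |z_2| = 1}) ∪ ({z_1 : 1 ≤ |z_1| ≤ |a|} × {z_2 : |z_2| ≤ 1}). In particular J(G) is not forward invariant under G. -/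
/-!
Every element of `G` has the form `z ↦ (z₁ ^ 2ⁿ / a ^ c, z₂ ^ 2ⁿ)` with `n ≥ 1` and `c < 2ⁿ`, and
there are finitely many for each `n`. Hence a sequence in `G` either repeats one map infinitely
often or its degrees `2ⁿ` tend to infinity. Off the claimed set, this makes the maps tend uniformly
to `0` near points with `‖z‖ < 1`, and escape uniformly near points with `|z₂| > 1` or `|z₁| > |a|`
(there `|z₁| ^ 2ⁿ / |a| ^ c ≥ (|z₁| / |a|) ^ 2ⁿ` because `c < 2ⁿ`).

On the claimed set there are maps in `G` of degrees `2ⁿ → ∞` whose values at `z` have norm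
between `1` and `|a|`: take `c = 0` if `|z₂| = 1`, and otherwise `c` with
`|a| ^ c ≤ |z₁| ^ 2ⁿ ≤ |a| ^ (c + 1)`.
Since the maps are homogeneous, `t • z` is attracted to `0` for `t < 1` and escapes for `t > 1`,
so no neighbourhood of `z` is normal. Finally `(a, 0)` lies in `J(G)` but `f (a, 0) = (a², 0)`
does not.
-/

open Set Filter Metric Topology

noncomputable section

theorem exists_lt_le_le_succ {α : Type*} [LinearOrder α] (u : ℕ → α) {y : α} {N : ℕ}
    (hN : 1 ≤ N) (h0 : u 0 ≤ y) (hN' : y ≤ u N) : ∃ c < N, u c ≤ y ∧ y ≤ u (c + 1) := by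
  induction N, hN using Nat.le_induction with
  | base => exact ⟨0, Nat.one_pos, h0, hN'⟩
  | succ N hN ih =>
    rcases le_or_gt y (u N) with hy | hy
    · obtain ⟨c, hc, hc'⟩ := ih hy
      exact ⟨c, hc.trans N.lt_succ_self, hc'⟩
    · exact ⟨N, N.lt_succ_self, hy.le, hN'⟩

theorem exists_const_subseq_or_tendsto_cofinite {α : Type*} (f : ℕ → α) :
    (∃ x, ∃ s : ℕ → ℕ, StrictMono s ∧ ∀ n, f (s n) = x) ∨ Tendsto f atTop cofinite := by
  by_cases h : ∃ x, (f ⁻¹' {x}).Infinite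
  · obtain ⟨x, hx⟩ := h
    obtain ⟨s, hs, hsx⟩ := extraction_of_frequently_atTop (Nat.frequently_atTop_iff_infinite.2 hx)
    exact .inl ⟨x, s, hs, hsx⟩
  · simp only [not_exists, not_infinite] at h
    exact .inr (Nat.cofinite_eq_atTop ▸ Tendsto.cofinite_of_finite_preimage_singleton h)

theorem norm_pair {E : Type*} [SeminormedAddGroup E] (u v : E) :
    ‖(![u, v] : Fin 2 → E)‖ = max ‖u‖ ‖v‖ := by
  simp [Pi.norm_def, Fin.univ_succ]

section FatouJulia

variable {k : ℕ} {G : Set (Ck k → Ck k)} {z : Ck k}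

theorem notMem_fatouSet_of_mem_closure (F : ℕ → Ck k → Ck k) (hF : ∀ n, F n ∈ G)
    (h0 : z ∈ closure {p | Tendsto (fun n => ‖F n p‖) atTop (𝓝 0)})
    (hinf : z ∈ closure {q | Tendsto (fun n => ‖F n q‖) atTop atTop}) :
    z ∉ FatouSet G := by
  rintro ⟨U, hU, hzU, hfatou⟩
  obtain ⟨p, hpU, hp⟩ := mem_closure_iff.1 h0 U hU hzU
  obtain ⟨q, hqU, hq⟩ := mem_closure_iff.1 hinf U hU hzU
  obtain ⟨s, hs, hconv | hdiv⟩ := hfatou F hF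
  · obtain ⟨g, hg⟩ := hconv
    exact not_tendsto_nhds_of_tendsto_atTop (hq.comp hs.tendsto_atTop) _
      (hg.tendsto_at hqU).norm
  · have hp_large := hdiv {p} (singleton_subset_iff.2 hpU) isCompact_singleton 1 one_pos
    have hp_small := (hp.comp hs.tendsto_atTop).eventually_lt_const one_pos
    obtain ⟨n, hn, hn'⟩ := (hp_large.and hp_small).exists
    exact (hn p rfl).not_gt hn'

theorem notMem_fatouSet_of_homogeneous (F : ℕ → Ck k → Ck k) (hF : ∀ n, F n ∈ G)
    (d : ℕ → ℕ) (hd : Tendsto d atTop atTop) (hhom : ∀ n (t : ℂ) w, F n (t • w) = t ^ d n • F n w)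
    {m M : ℝ} (hm : 0 < m) (hbound : ∀ n, m ≤ ‖F n z‖ ∧ ‖F n z‖ ≤ M) : z ∉ FatouSet G := by
  have norm_smul_eq (r : ℝ) (hr : 0 ≤ r) (n : ℕ) : ‖F n ((r : ℂ) • z)‖ = r ^ d n * ‖F n z‖ := by
    rw [hhom, norm_smul, norm_pow, Complex.norm_real, Real.norm_of_nonneg hr]
  have hline : Tendsto (fun r : ℝ => (r : ℂ) • z) (𝓝 1) (𝓝 z) :=
    (Complex.continuous_ofReal.smul continuous_const).tendsto' 1 z (by simp)
  refine notMem_fatouSet_of_mem_closure F hF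
    (mem_closure_of_tendsto (b := 𝓝[<] 1) (hline.mono_left nhdsWithin_le_nhds) ?_)
    (mem_closure_of_tendsto (b := 𝓝[>] 1) (hline.mono_left nhdsWithin_le_nhds) ?_)
  · filter_upwards [Ioo_mem_nhdsLT zero_lt_one] with r ⟨hr0, hr1⟩
    refine squeeze_zero (fun n => norm_nonneg _) (fun n => ?_)
      ((((tendsto_pow_atTop_nhds_zero_of_lt_one hr0.le hr1).comp hd).mul_const M).trans_eq ?_)
    · rw [norm_smul_eq r hr0.le]
      exact mul_le_mul_of_nonneg_left (hbound n).2 (by positivity)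
    · rw [zero_mul]
  · filter_upwards [self_mem_nhdsWithin] with r (hr : 1 < r)
    refine tendsto_atTop_mono (fun n => ?_)
      (((tendsto_pow_atTop_atTop_of_one_lt hr).comp hd).atTop_mul_const hm)
    rw [norm_smul_eq r (by linarith)]
    exact mul_le_mul_of_nonneg_left (hbound n).1 (pow_pos (by linarith) _).le

end FatouJulia

namespace SquaringSemigroup

def generators (a : ℂ) : Set (Ck 2 → Ck 2) :=
  {(fun z : Ck 2 => ![z 0 ^ 2, z 1 ^ 2]), (fun z : Ck 2 => ![z 0 ^ 2 / a, z 1 ^ 2])}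

def powMap (a : ℂ) (n c : ℕ) (z : Ck 2) : Ck 2 := ![z 0 ^ 2 ^ n / a ^ c, z 1 ^ 2 ^ n]

variable {a : ℂ}

theorem generators_eq : generators a = {powMap a 1 0, powMap a 1 1} := by
  have hf : powMap a 1 0 = fun z => ![z 0 ^ 2, z 1 ^ 2] := by funext z; simp [powMap]
  have hg : powMap a 1 1 = fun z => ![z 0 ^ 2 / a, z 1 ^ 2] := by funext z; simp [powMap]
  rw [hf, hg, generators]

theorem powMap_comp (n c m d : ℕ) :
    powMap a n c ∘ powMap a m d = powMap a (n + m) (c + 2 ^ n * d) := by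
  have hexp : 2 ^ m * 2 ^ n = 2 ^ (n + m) := by rw [mul_comm, pow_add]
  funext z
  simp only [powMap, Function.comp_apply, Matrix.cons_val_zero, Matrix.cons_val_one]
  rw [div_pow, ← pow_mul, ← pow_mul, ← pow_mul, hexp, div_div, ← pow_add, add_comm (d * 2 ^ n),
    mul_comm d]

theorem powMap_mem_genSet {n c : ℕ} (hn : 1 ≤ n) (hc : c < 2 ^ n) :
    powMap a n c ∈ GenSet (generators a) := by
  induction n, hn using Nat.le_induction generalizing c with
  | base =>
    refine .base (generators_eq ▸ ?_)
    interval_cases c <;> simp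
  | succ n hn ih =>
    have hf : powMap a 1 0 ∈ generators a := generators_eq ▸ by simp
    have hg : powMap a 1 1 ∈ generators a := generators_eq ▸ by simp
    rcases lt_or_ge c (2 ^ n) with hcn | hcn
    · have h := powMap_comp (a := a) n c 1 0
      rw [mul_zero, add_zero] at h
      exact h ▸ .comp (ih hcn) (.base hf)
    · have h := powMap_comp (a := a) n (c - 2 ^ n) 1 1
      rw [mul_one, Nat.sub_add_cancel hcn] at h
      exact h ▸ .comp (ih (by rw [pow_succ] at hc; omega)) (.base hg)

theorem mem_genSet_iff {φ : Ck 2 → Ck 2} :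
    φ ∈ GenSet (generators a) ↔ ∃ n c, 1 ≤ n ∧ c < 2 ^ n ∧ φ = powMap a n c := by
  refine ⟨fun h => ?_, fun ⟨n, c, hn, hc, hφ⟩ => hφ ▸ powMap_mem_genSet hn hc⟩
  induction h with
  | base h =>
    rw [generators_eq] at h
    rcases h with rfl | rfl
    exacts [⟨1, 0, le_rfl, by norm_num, rfl⟩, ⟨1, 1, le_rfl, by norm_num, rfl⟩]
  | comp _ _ ih₁ ih₂ =>
    obtain ⟨n, c, hn, hc, rfl⟩ := ih₁
    obtain ⟨m, d, -, hd, rfl⟩ := ih₂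
    refine ⟨n + m, c + 2 ^ n * d, by omega, ?_, powMap_comp (a := a) n c m d⟩
    calc c + 2 ^ n * d < 2 ^ n * (d + 1) := by rw [mul_add_one]; omega
      _ ≤ 2 ^ n * 2 ^ m := Nat.mul_le_mul_left _ hd
      _ = 2 ^ (n + m) := (pow_add 2 n m).symm

theorem norm_powMap (n c : ℕ) (z : Ck 2) :
    ‖powMap a n c z‖ = max (‖z 0‖ ^ 2 ^ n / ‖a‖ ^ c) (‖z 1‖ ^ 2 ^ n) := by
  rw [powMap, norm_pair, norm_div, norm_pow, norm_pow, norm_pow]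

theorem powMap_smul (n c : ℕ) (t : ℂ) (z : Ck 2) :
    powMap a n c (t • z) = t ^ 2 ^ n • powMap a n c z := by
  ext i
  fin_cases i <;> simp [powMap, mul_pow, mul_div_assoc]

theorem norm_powMap_le (ha : 1 ≤ ‖a‖) (n c : ℕ) (z : Ck 2) :
    ‖powMap a n c z‖ ≤ ‖z‖ ^ 2 ^ n := by
  rw [norm_powMap]
  refine max_le ((div_le_self (by positivity) (one_le_pow₀ ha)).trans ?_) ?_ <;>
    exact pow_le_pow_left₀ (norm_nonneg _) (norm_le_pi_norm z _) _

theorem pow_le_norm_powMap (ha : 1 ≤ ‖a‖) {n c : ℕ} (hc : c < 2 ^ n) {ρ : ℝ} (hρ : 0 ≤ ρ)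
    {w : Ck 2} (hw : ρ < ‖w 1‖ ∨ ρ * ‖a‖ < ‖w 0‖) : ρ ^ 2 ^ n ≤ ‖powMap a n c w‖ := by
  rw [norm_powMap]
  rcases hw with hw | hw
  · exact (pow_le_pow_left₀ hρ hw.le _).trans (le_max_right _ _)
  · refine le_trans ?_ (le_max_left _ _)
    have hpow : ‖a‖ ^ c ≤ ‖a‖ ^ 2 ^ n := pow_le_pow_right₀ ha hc.le
    rw [le_div_iff₀ (by positivity)]
    calc ρ ^ 2 ^ n * ‖a‖ ^ c ≤ (ρ * ‖a‖) ^ 2 ^ n := by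
          rw [mul_pow]; exact mul_le_mul_of_nonneg_left hpow (by positivity)
      _ ≤ ‖w 0‖ ^ 2 ^ n := pow_le_pow_left₀ (by positivity) hw.le _

theorem tendsto_fst_of_tendsto_cofinite {k c : ℕ → ℕ} (hc : ∀ n, c n < 2 ^ k n)
    (h : Tendsto (fun n => (k n, c n)) atTop cofinite) : Tendsto k atTop atTop := by
  refine tendsto_atTop.2 fun m => ?_
  have hfin : (Iio m ×ˢ Iio (2 ^ m)).Finite := (finite_Iio m).prod (finite_Iio (2 ^ m))
  filter_upwards [h.eventually hfin.eventually_cofinite_notMem] with n hn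
  by_contra hkn
  push Not at hkn
  exact hn ⟨hkn, (hc n).trans_le (Nat.pow_le_pow_right two_pos hkn.le)⟩

theorem mem_fatouSet_of_forall_tendsto {U : Set (Ck 2)} (hU : IsOpen U) {z : Ck 2} (hz : z ∈ U)
    (h : ∀ k c : ℕ → ℕ, (∀ n, c n < 2 ^ k n) → Tendsto k atTop atTop →
      TendstoLocallyUniformlyOn (fun n => powMap a (k n) (c n)) 0 atTop U ∨
        DivergesUniformlyOn (fun n => powMap a (k n) (c n)) U) :
    z ∈ FatouSet (GenSet (generators a)) := by
  refine ⟨U, hU, hz, fun f hf => ?_⟩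
  choose k c _ hc hf using fun n => mem_genSet_iff.1 (hf n)
  obtain rfl : f = fun n => powMap a (k n) (c n) := funext hf
  rcases exists_const_subseq_or_tendsto_cofinite (fun n => (k n, c n)) with
    ⟨x, s, hs, hsx⟩ | hkc
  · have hconst : ∀ n, powMap a (k (s n)) (c (s n)) = powMap a x.1 x.2 := fun n => by
      rw [← hsx n]
    refine ⟨s, hs, .inl ⟨powMap a x.1 x.2, ?_⟩⟩
    simp only [hconst]
    exact fun u hu _ _ => ⟨U, self_mem_nhdsWithin, .of_forall fun _ _ _ => refl_mem_uniformity hu⟩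
  · exact ⟨id, strictMono_id,
      (h k c hc (tendsto_fst_of_tendsto_cofinite hc hkc)).imp_left fun h0 => ⟨0, h0⟩⟩

theorem mem_fatouSet_of_one_lt_or_lt (ha : 1 ≤ ‖a‖) {z : Ck 2}
    (hz : 1 < ‖z 1‖ ∨ ‖a‖ < ‖z 0‖) : z ∈ FatouSet (GenSet (generators a)) := by
  obtain ⟨ρ, hρ, hzρ⟩ : ∃ ρ, 1 < ρ ∧ (ρ < ‖z 1‖ ∨ ρ * ‖a‖ < ‖z 0‖) := by
    rcases hz with hz | hz
    · obtain ⟨ρ, hρ, hρz⟩ := exists_between hz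
      exact ⟨ρ, hρ, .inl hρz⟩
    · obtain ⟨ρ, hρ, hρz⟩ := exists_between ((one_lt_div (by positivity)).2 hz)
      exact ⟨ρ, hρ, .inr ((lt_div_iff₀ (by positivity)).1 hρz)⟩
  have hU : IsOpen {w : Ck 2 | ρ < ‖w 1‖ ∨ ρ * ‖a‖ < ‖w 0‖} :=
    (isOpen_lt continuous_const (continuous_apply 1).norm).union
      (isOpen_lt continuous_const (continuous_apply 0).norm)
  refine mem_fatouSet_of_forall_tendsto hU hzρ fun k c hc hk => .inr ?_
  intro K hK _ R _
  filter_upwards [((tendsto_pow_atTop_atTop_of_one_lt hρ).comp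
    ((tendsto_pow_atTop_atTop_of_one_lt (one_lt_two : 1 < 2)).comp hk)).eventually_gt_atTop R]
    with n hn w hw
  exact hn.trans_le (pow_le_norm_powMap ha (hc n) (by positivity) (hK hw))

theorem mem_fatouSet_of_norm_lt_one (ha : 1 ≤ ‖a‖) {z : Ck 2} (hz : ‖z‖ < 1) :
    z ∈ FatouSet (GenSet (generators a)) := by
  obtain ⟨ρ, hzρ, hρ⟩ := exists_between hz
  refine mem_fatouSet_of_forall_tendsto isOpen_ball (mem_ball_zero_iff.2 hzρ)
    fun k c _ hk => .inl (TendstoUniformlyOn.tendstoLocallyUniformlyOn ?_)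
  rw [Metric.tendstoUniformlyOn_iff]
  intro ε hε
  filter_upwards [((tendsto_pow_atTop_nhds_zero_of_lt_one (norm_nonneg z |>.trans hzρ.le) hρ).comp
    ((tendsto_pow_atTop_atTop_of_one_lt (one_lt_two : 1 < 2)).comp hk)).eventually_lt_const hε]
    with n hn w hw
  rw [Pi.zero_apply, dist_zero_left]
  calc ‖powMap a (k n) (c n) w‖ ≤ ‖w‖ ^ 2 ^ k n := norm_powMap_le ha _ _ w
    _ ≤ ρ ^ 2 ^ k n := pow_le_pow_left₀ (norm_nonneg w) (mem_ball_zero_iff.1 hw).le _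
    _ < ε := hn

def juliaModel (a : ℂ) : Set (Ck 2) :=
  {z | ‖z 0‖ ≤ 1 ∧ ‖z 1‖ = 1} ∪ {z | 1 ≤ ‖z 0‖ ∧ ‖z 0‖ ≤ ‖a‖ ∧ ‖z 1‖ ≤ 1}

theorem tendsto_two_pow_succ : Tendsto (fun n : ℕ => 2 ^ (n + 1)) atTop atTop :=
  (tendsto_pow_atTop_atTop_of_one_lt (one_lt_two : 1 < 2)).comp (tendsto_add_atTop_nat 1)

theorem notMem_fatouSet_of_norm_le_one_of_norm_eq_one {z : Ck 2} (hz₀ : ‖z 0‖ ≤ 1)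
    (hz₁ : ‖z 1‖ = 1) : z ∉ FatouSet (GenSet (generators a)) := by
  refine notMem_fatouSet_of_homogeneous (fun n => powMap a (n + 1) 0)
    (fun n => powMap_mem_genSet (Nat.le_add_left 1 n) (by positivity)) _ tendsto_two_pow_succ
    (fun n => powMap_smul _ _) one_pos (M := 1) fun n => ?_
  have h : ‖powMap a (n + 1) 0 z‖ = 1 := by
    rw [norm_powMap, hz₁, one_pow, pow_zero, div_one]
    exact max_eq_right (pow_le_one₀ (norm_nonneg _) hz₀)
  exact ⟨h.ge, h.le⟩

theorem notMem_fatouSet_of_one_le_norm_le {z : Ck 2} (hz₀ : 1 ≤ ‖z 0‖) (hz₀a : ‖z 0‖ ≤ ‖a‖)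
    (hz₁ : ‖z 1‖ ≤ 1) : z ∉ FatouSet (GenSet (generators a)) := by
  have ha : 0 < ‖a‖ := one_pos.trans_le (hz₀.trans hz₀a)
  choose c hc hlow hhigh using fun n : ℕ => exists_lt_le_le_succ (‖a‖ ^ ·) (N := 2 ^ (n + 1))
    Nat.one_le_two_pow (by simpa using one_le_pow₀ hz₀) (pow_le_pow_left₀ (by positivity) hz₀a _)
  refine notMem_fatouSet_of_homogeneous (fun n => powMap a (n + 1) (c n))
    (fun n => powMap_mem_genSet (Nat.le_add_left 1 n) (hc n)) _ tendsto_two_pow_succ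
    (fun n => powMap_smul _ _) one_pos (M := ‖a‖) fun n => ?_
  have hfst : 1 ≤ ‖z 0‖ ^ 2 ^ (n + 1) / ‖a‖ ^ c n ∧ ‖z 0‖ ^ 2 ^ (n + 1) / ‖a‖ ^ c n ≤ ‖a‖ := by
    rw [one_le_div (by positivity), div_le_iff₀ (by positivity), ← pow_succ']
    exact ⟨hlow n, hhigh n⟩
  have hsnd : ‖z 1‖ ^ 2 ^ (n + 1) ≤ 1 := pow_le_one₀ (norm_nonneg _) hz₁
  rw [norm_powMap]
  exact ⟨le_max_of_le_left hfst.1, max_le hfst.2 (hsnd.trans (hfst.1.trans hfst.2))⟩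

theorem juliaModel_subset : juliaModel a ⊆ JuliaSet (GenSet (generators a)) := by
  rintro z (⟨hz₀, hz₁⟩ | ⟨hz₀, hz₀a, hz₁⟩)
  exacts [notMem_fatouSet_of_norm_le_one_of_norm_eq_one hz₀ hz₁,
    notMem_fatouSet_of_one_le_norm_le hz₀ hz₀a hz₁]

theorem compl_juliaModel_subset (ha : 1 ≤ ‖a‖) :
    (juliaModel a)ᶜ ⊆ FatouSet (GenSet (generators a)) := by
  intro z hz
  simp only [juliaModel, mem_compl_iff, mem_union, mem_ofPred_eq, not_or, not_and, not_le] at hz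
  obtain ⟨hA, hB⟩ := hz
  rcases lt_or_ge 1 ‖z 1‖ with hz₁ | hz₁
  · exact mem_fatouSet_of_one_lt_or_lt ha (.inl hz₁)
  rcases lt_or_ge ‖a‖ ‖z 0‖ with hz₀ | hz₀
  · exact mem_fatouSet_of_one_lt_or_lt ha (.inr hz₀)
  have hz₀' : ‖z 0‖ < 1 := lt_of_not_ge fun h => (hB h hz₀).not_ge hz₁
  have hz₁' : ‖z 1‖ < 1 := lt_of_le_of_ne hz₁ (hA hz₀'.le)
  refine mem_fatouSet_of_norm_lt_one ha ((pi_norm_lt_iff one_pos).2 fun i => ?_)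
  fin_cases i
  exacts [hz₀', hz₁']

theorem juliaSet_eq (ha : 1 ≤ ‖a‖) : JuliaSet (GenSet (generators a)) = juliaModel a :=
  (compl_subset_comm.1 (compl_juliaModel_subset ha)).antisymm juliaModel_subset

end SquaringSemigroup

open SquaringSemigroup in
/-- For `f(z₁,z₂) = (z₁², z₂²)` and `g(z₁,z₂) = (z₁²/a, z₂²)` with `|a| > 1`, the Julia
set of `G = ⟨f, g⟩` is `({|z₁| ≤ 1} × {|z₂| = 1}) ∪ ({1 ≤ |z₁| ≤ |a|} × {|z₂| ≤ 1})`;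
in particular `J(G)` is not forward invariant under `G`. -/
theorem stmt_7 (a : ℂ) (ha : 1 < ‖a‖) :
    JuliaSet (GenSet {(fun z : Ck 2 => ![z 0 ^ 2, z 1 ^ 2]),
        (fun z : Ck 2 => ![z 0 ^ 2 / a, z 1 ^ 2])}) =
      ({z : Ck 2 | ‖z 0‖ ≤ 1 ∧ ‖z 1‖ = 1} ∪
        {z : Ck 2 | 1 ≤ ‖z 0‖ ∧ ‖z 0‖ ≤ ‖a‖ ∧
          ‖z 1‖ ≤ 1}) ∧
    ¬ (∀ φ ∈ GenSet {(fun z : Ck 2 => ![z 0 ^ 2, z 1 ^ 2]),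
          (fun z : Ck 2 => ![z 0 ^ 2 / a, z 1 ^ 2])},
        φ '' JuliaSet (GenSet {(fun z : Ck 2 => ![z 0 ^ 2, z 1 ^ 2]),
            (fun z : Ck 2 => ![z 0 ^ 2 / a, z 1 ^ 2])}) ⊆
          JuliaSet (GenSet {(fun z : Ck 2 => ![z 0 ^ 2, z 1 ^ 2]),
            (fun z : Ck 2 => ![z 0 ^ 2 / a, z 1 ^ 2])})) := by
  change JuliaSet (GenSet (generators a)) = juliaModel a ∧
    ¬ ∀ φ ∈ GenSet (generators a), φ '' JuliaSet (GenSet (generators a)) ⊆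
      JuliaSet (GenSet (generators a))
  rw [juliaSet_eq ha.le]
  refine ⟨rfl, fun hinv => ?_⟩
  have hmem : (![a, 0] : Ck 2) ∈ juliaModel a := .inr (by simp [ha.le])
  have himage :=
    hinv _ (powMap_mem_genSet (c := 0) le_rfl two_pos) (mem_image_of_mem (powMap a 1 0) hmem)
  obtain ⟨-, hsq⟩ : 1 ≤ ‖a‖ ∧ ‖a‖ ^ 2 ≤ ‖a‖ := by simpa [juliaModel, powMap] using himage
  exact (lt_self_pow₀ ha one_lt_two).not_ge hsq
end
end

section
/- Let k ≥ 2, let G be a semigroup generated by holomorphic endomorphisms of ℂ^k of maximal generic rank k, and let Ω be a connected component of F(G). Then Ω is recurrent if and only if for every sequence (φ_j) in G there exist a compact set K ⊆ Ω, a subsequence (φ_{j_m}), and points p_{j_m} ∈ K such that φ_{j_m}(p_{j_m}) converges to some point p_0 ∈ Ω. -/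
open Set Filter Metric Topology

noncomputable section

/-! A recurrent component satisfies the condition with `K` a single point. Conversely, by
compactness of `K` we may assume `p_m → q ∈ K ⊆ F(G)`. At `q` the Fatou property gives a further
subsequence that either diverges uniformly to infinity near `q`, which `φ(p_m) → p₀` rules out,
or converges locally uniformly to a continuous limit `h`; then `φ(p_m)` and `φ(q)` both tend to
`h q = p₀`. -/

theorem SemigroupGen.continuous {α : Type*} [TopologicalSpace α] {S : Set (α → α)}
    (hS : ∀ f ∈ S, Continuous f) {f : α → α} (hf : SemigroupGen S f) : Continuous f := by
  induction hf with
  | base h => exact hS _ h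
  | comp _ _ ih₁ ih₂ => exact ih₁.comp ih₂

theorem DivergesUniformlyOn.tendsto_norm_comp {k : ℕ} {f : ℕ → Ck k → Ck k} {U : Set (Ck k)}
    (hf : DivergesUniformlyOn f U) (hU : IsOpen U) {q : Ck k} (hq : q ∈ U) {x : ℕ → Ck k}
    (hx : Tendsto x atTop (𝓝 q)) : Tendsto (fun n => ‖f n (x n)‖) atTop atTop := by
  obtain ⟨r, hr, hrU⟩ := nhds_basis_closedBall.mem_iff.1 (hU.mem_nhds hq)
  refine tendsto_atTop.2 fun R => ?_
  filter_upwards [hx (closedBall_mem_nhds q hr),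
    hf _ hrU (isCompact_closedBall q r) (max R 1) (by positivity)] with n hxn hn
  exact (le_max_left R 1).trans (hn _ hxn).le

theorem exists_subseq_tendsto_of_mem_fatouSet {k : ℕ} {G : Set (Ck k → Ck k)}
    (hG : ∀ f ∈ G, Continuous f) {q : Ck k} (hq : q ∈ FatouSet G) {g : ℕ → Ck k → Ck k}
    (hg : ∀ n, g n ∈ G) {x : ℕ → Ck k} (hx : Tendsto x atTop (𝓝 q)) {p0 : Ck k}
    (hgx : Tendsto (fun n => g n (x n)) atTop (𝓝 p0)) :
    ∃ s : ℕ → ℕ, StrictMono s ∧ Tendsto (fun m => g (s m) q) atTop (𝓝 p0) := by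
  obtain ⟨U, hUo, hqU, hU⟩ := hq
  obtain ⟨s, hs, ⟨h, hgh⟩ | hdiv⟩ := hU g hg
  · have hxs : Tendsto (x ∘ s) atTop (𝓝[U] q) := by
      rw [hUo.nhdsWithin_eq hqU]
      exact hx.comp hs.tendsto_atTop
    have hh : ContinuousOn h U :=
      hgh.continuousOn (Frequently.of_forall fun n => (hG _ (hg (s n))).continuousOn)
    have hgxs : Tendsto (fun m => g (s m) (x (s m))) atTop (𝓝 (h q)) :=
      hgh.tendsto_comp (hh.continuousWithinAt hqU) hqU hxs
    have hp0 : h q = p0 := tendsto_nhds_unique hgxs (hgx.comp hs.tendsto_atTop)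
    exact ⟨s, hs, hp0 ▸ hgh.tendsto_at hqU⟩
  · exact absurd (hdiv.tendsto_norm_comp hUo hqU (hx.comp hs.tendsto_atTop))
      (not_tendsto_atTop_of_tendsto_nhds (hgx.comp hs.tendsto_atTop).norm)

theorem stmt_14_general {k : ℕ} (S : Set (Ck k → Ck k))
    (hhol : ∀ f ∈ S, Differentiable ℂ f)
    (Ω : Set (Ck k)) (hΩ : IsFatouComponent (GenSet S) Ω) :
    Recurrent (GenSet S) Ω ↔
      ∀ g : ℕ → Ck k → Ck k, (∀ j, g j ∈ GenSet S) →
        ∃ K ⊆ Ω, IsCompact K ∧ ∃ s : ℕ → ℕ, StrictMono s ∧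
          ∃ p : ℕ → Ck k, (∀ m, p m ∈ K) ∧ ∃ p0 ∈ Ω,
            Tendsto (fun m => g (s m) (p m)) atTop (𝓝 p0) := by
  constructor
  · intro hrec g hg
    obtain ⟨s, hs, p, hp, p0, hp0, htend⟩ := hrec g hg
    exact ⟨{p}, singleton_subset_iff.2 hp, isCompact_singleton, s, hs,
      fun _ => p, fun _ => rfl, p0, hp0, htend⟩
  · intro H g hg
    obtain ⟨K, hKΩ, hK, s, hs, p, hpK, p0, hp0, hgp⟩ := H g hg
    obtain ⟨q, hqK, t, ht, hpq⟩ := hK.tendsto_subseq hpK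
    obtain ⟨z, -, rfl⟩ := hΩ
    have hGcont : ∀ f ∈ GenSet S, Continuous f := fun f hf =>
      SemigroupGen.continuous (fun f hf => (hhol f hf).continuous) hf
    obtain ⟨u, hu, hgq⟩ := exists_subseq_tendsto_of_mem_fatouSet hGcont
      (connectedComponentIn_subset _ _ (hKΩ hqK)) (fun n => hg (s (t n))) hpq
      (hgp.comp ht.tendsto_atTop)
    exact ⟨s ∘ t ∘ u, hs.comp (ht.comp hu), q, hKΩ hqK, p0, hp0, hgq⟩

/-- A Fatou component `Ω` of `G` is recurrent iff for every sequence in `G` there are a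
compact `K ⊆ Ω`, a subsequence `(φ_{j_m})` and points `p_{j_m} ∈ K` with
`φ_{j_m}(p_{j_m}) → p_0 ∈ Ω`. -/
theorem stmt_14 {k : ℕ} (hk : 2 ≤ k) (S : Set (Ck k → Ck k))
    (hhol : ∀ f ∈ S, Differentiable ℂ f)
    (hrank : ∀ f ∈ S, ∃ z, jacDet f z ≠ 0)
    (Ω : Set (Ck k)) (hΩ : IsFatouComponent (GenSet S) Ω) :
    Recurrent (GenSet S) Ω ↔
      ∀ g : ℕ → Ck k → Ck k, (∀ j, g j ∈ GenSet S) →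
        ∃ K ⊆ Ω, IsCompact K ∧ ∃ s : ℕ → ℕ, StrictMono s ∧
          ∃ p : ℕ → Ck k, (∀ m, p m ∈ K) ∧ ∃ p0 ∈ Ω,
            Tendsto (fun m => g (s m) (p m)) atTop (𝓝 p0) :=
  stmt_14_general S hhol Ω hΩ
end
end

section
/- Let k ≥ 2, let φ : ℂ^k → ℂ^k be holomorphic, and let Ω ⊆ ℂ^k be a connected open set with φ(Ω) ⊆ Ω. Suppose some subsequence (φ^{n_j}) of the iterates of φ converges uniformly on compact subsets of Ω to the constant map with value p_0 ∈ Ω. Then φ(p_0) = p_0, and p_0 is an attracting fixed point of φ, i.e., every eigenvalue of the complex derivative Dφ(p_0) has modulus strictly less than 1. -/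
open Set Filter Metric Topology

noncomputable section

/-!
The fixed point comes from passing to the limit in `φ^[n j] (φ p₀) = φ (φ^[n j] p₀)`.
For an eigenvector `v` of `Dφ(p₀)` with eigenvalue `μ`, the chain rule at the fixed point gives
`Dφ^{n_j}(p₀) v = μ^{n_j} v`. Restricted to the complex line through `p₀` in direction `v`, the
iterates are holomorphic functions of one variable converging locally uniformly to a constant, so
by Weierstrass' theorem their derivatives at `p₀` tend to `0`; hence `|μ| < 1`.
-/

theorem Function.IsFixedPt.of_tendsto_iterate {X ι : Type*} [TopologicalSpace X] [T2Space X]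
    {l : Filter ι} [l.NeBot] {f : X → X} {x p : X} {n : ι → ℕ} (hf : ContinuousAt f p)
    (hx : Tendsto (fun i => f^[n i] x) l (𝓝 p))
    (hfx : Tendsto (fun i => f^[n i] (f x)) l (𝓝 p)) :
    Function.IsFixedPt f p := by
  have hcomm : (fun i => f^[n i] (f x)) = fun i => f (f^[n i] x) := by
    funext i
    exact Function.Commute.iterate_self f (n i) x
  rw [hcomm] at hfx
  exact tendsto_nhds_unique (hf.tendsto.comp hx) hfx

theorem TendstoLocallyUniformlyOn.tendsto_fderiv_apply {ι E F : Type*}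
    [NormedAddCommGroup E] [NormedSpace ℂ E] [NormedAddCommGroup F] [NormedSpace ℂ F]
    [CompleteSpace F]
    {l : Filter ι} {f : ι → E → F} {g : E → F} {U : Set E} {x : E}
    (hconv : TendstoLocallyUniformlyOn f g l U) (hf : ∀ᶠ i in l, DifferentiableOn ℂ (f i) U)
    (hU : IsOpen U) (hx : x ∈ U) (hg : DifferentiableAt ℂ g x) (v : E) :
    Tendsto (fun i => fderiv ℂ (f i) x v) l (𝓝 (fderiv ℂ g x v)) := by
  set line : ℂ → E := fun t => x + t • v
  have hline : ∀ t, HasDerivAt line v t := fun t => by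
    simpa only [one_smul] using ((hasDerivAt_id' t).smul_const v).const_add x
  have hline0 : line 0 = x := by simp [line]
  have hD : IsOpen (line ⁻¹' U) := hU.preimage (by fun_prop)
  have h0D : (0 : ℂ) ∈ line ⁻¹' U := by simpa [hline0] using hx
  have hderiv := ((hconv.comp line (mapsTo_preimage line U) (by fun_prop)).deriv
    (hf.mono fun i hi => hi.comp (fun t _ => (hline t).differentiableAt.differentiableWithinAt)
      (mapsTo_preimage line U)) hD).tendsto_at h0D
  have hderiv_line :
      ∀ h : E → F, DifferentiableAt ℂ h x → _root_.deriv (h ∘ line) 0 = fderiv ℂ h x v :=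
    fun h hh => by
      have hh' : HasFDerivAt h (fderiv ℂ h x) (line 0) := hline0 ▸ hh.hasFDerivAt
      exact (hh'.comp_hasDerivAt 0 (hline 0)).deriv
  rw [hderiv_line g hg] at hderiv
  refine hderiv.congr' ?_
  filter_upwards [hf] with i hi
  exact hderiv_line (f i) (hi.differentiableAt (hU.mem_nhds hx))

theorem norm_lt_one_of_tendsto_pow_smul {ι 𝕜 E : Type*} [NormedField 𝕜] [NormedAddCommGroup E]
    [NormedSpace 𝕜 E] {l : Filter ι} [l.NeBot] {n : ι → ℕ} {μ : 𝕜} {v : E} (hv : v ≠ 0)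
    (h : Tendsto (fun i => μ ^ n i • v) l (𝓝 0)) : ‖μ‖ < 1 := by
  by_contra! hμ
  have hge : ∀ i, ‖v‖ ≤ ‖μ ^ n i • v‖ := fun i => by
    rw [norm_smul, norm_pow]
    exact le_mul_of_one_le_left (norm_nonneg v) (one_le_pow₀ hμ)
  have hv_le : ‖v‖ ≤ 0 := le_of_tendsto_of_tendsto tendsto_const_nhds (by simpa using h.norm)
    (Eventually.of_forall hge)
  exact hv (norm_le_zero_iff.1 hv_le)

theorem stmt_16_general {k : ℕ} (φ : Ck k → Ck k)
    (hhol : Differentiable ℂ φ)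
    (Ω : Set (Ck k)) (hΩopen : IsOpen Ω)
    (hinv : φ '' Ω ⊆ Ω) (p0 : Ck k) (hp0 : p0 ∈ Ω)
    (n : ℕ → ℕ)
    (hconv : TendstoLocallyUniformlyOn (fun j => φ^[n j]) (fun _ => p0) atTop Ω) :
    φ p0 = p0 ∧
    ∀ μ : ℂ, Module.End.HasEigenvalue ((fderiv ℂ φ p0).toLinearMap) μ →
      ‖μ‖ < 1 := by
  have hfix : φ p0 = p0 := Function.IsFixedPt.of_tendsto_iterate hhol.continuous.continuousAt
    (hconv.tendsto_at hp0) (hconv.tendsto_at (hinv (mem_image_of_mem φ hp0)))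
  refine ⟨hfix, fun μ hμ => ?_⟩
  obtain ⟨v, hv⟩ := hμ.exists_hasEigenvector
  have hiter : ∀ m, fderiv ℂ φ^[m] p0 v = μ ^ m • v := fun m => by
    rw [(hhol p0).hasFDerivAt.iterate hfix m |>.fderiv, ← hv.pow_apply m,
      ← ContinuousLinearMap.toLinearMap_pow, ContinuousLinearMap.coe_coe]
  have hderiv := hconv.tendsto_fderiv_apply
    (Eventually.of_forall fun j => (hhol.iterate (n j)).differentiableOn) hΩopen hp0
    (differentiableAt_const p0) v
  simp only [hiter, fderiv_fun_const, Pi.zero_apply, zero_apply] at hderiv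
  exact norm_lt_one_of_tendsto_pow_smul hv.2 hderiv

/-- If a subsequence of iterates of a holomorphic map `φ` converges locally uniformly on
a forward-invariant connected open set `Ω` to the constant `p_0 ∈ Ω`, then `p_0` is an
attracting fixed point of `φ`. -/
theorem stmt_16 {k : ℕ} (hk : 2 ≤ k) (φ : Ck k → Ck k)
    (hhol : Differentiable ℂ φ)
    (Ω : Set (Ck k)) (hΩopen : IsOpen Ω) (hΩconn : IsConnected Ω)
    (hinv : φ '' Ω ⊆ Ω) (p0 : Ck k) (hp0 : p0 ∈ Ω)
    (n : ℕ → ℕ) (hn : StrictMono n)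
    (hconv : TendstoLocallyUniformlyOn (fun j => φ^[n j]) (fun _ => p0) atTop Ω) :
    φ p0 = p0 ∧
    ∀ μ : ℂ, Module.End.HasEigenvalue ((fderiv ℂ φ p0).toLinearMap) μ →
      ‖μ‖ < 1 :=
  stmt_16_general φ hhol Ω hΩopen hinv p0 hp0 n hconv
end
end

section
/- Let k ≥ 2, let φ : ℂ^k → ℂ^k be holomorphic, and let Ω ⊆ ℂ^k be a connected open set with φ(Ω) ⊆ Ω. Suppose some subsequence (φ^{p_j}) of the iterates of φ, with p_j → ∞, converges uniformly on compact subsets of Ω to the identity map of Ω. Then φ restricted to Ω is a bijection of Ω onto Ω, i.e., φ is an automorphism of Ω. -/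
/-!
Injectivity: writing `φ^[p j] = φ^[p j - 1] ∘ φ`, points with the same image have the same
orbits along `p`, hence the same limit. Surjectivity: near a point `y ∈ Ω`, some iterate
`F = φ^[p j]` is uniformly close to the identity on a ball around `y`; by the Cauchy
estimates `F - id` is then a contraction there, so `F` hits `y`, and `y = φ (φ^[p j - 1] z)`.
-/

open Set Filter Metric Topology

noncomputable section

variable {E F : Type*} [NormedAddCommGroup E] [NormedSpace ℂ E]
  [NormedAddCommGroup F] [NormedSpace ℂ F]

theorem Complex.norm_fderiv_le_of_forall_mem_closedBall_norm_le {g : E → F} {z : E} {R C : ℝ}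
    (hR : 0 < R) (hg : DifferentiableOn ℂ g (closedBall z R))
    (hC : ∀ w ∈ closedBall z R, ‖g w‖ ≤ C) : ‖fderiv ℂ g z‖ ≤ C / R := by
  have hC0 : 0 ≤ C := (norm_nonneg _).trans (hC z (mem_closedBall_self hR.le))
  refine ContinuousLinearMap.opNorm_le_bound _ (by positivity) fun v => ?_
  rcases eq_or_ne v 0 with rfl | hv
  · simp
  -- apply the one-variable estimate on the complex line `t ↦ z + t • v`
  set ρ := R / ‖v‖
  have hρ : 0 < ρ := by positivity
  have hline : MapsTo (fun t : ℂ => z + t • v) (closedBall 0 ρ) (closedBall z R) := by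
    intro t ht
    rw [mem_closedBall, dist_zero_right] at ht
    rw [mem_closedBall, dist_self_add_left, norm_smul]
    calc ‖t‖ * ‖v‖ ≤ ρ * ‖v‖ := by gcongr
      _ = R := div_mul_cancel₀ _ (norm_ne_zero_iff.mpr hv)
  have hd : DiffContOnCl ℂ (fun t : ℂ => g (z + t • v)) (ball 0 ρ) := by
    refine DifferentiableOn.diffContOnCl ?_
    rw [closure_ball _ hρ.ne']
    exact hg.comp (by fun_prop) hline
  have hderiv : deriv (fun t : ℂ => g (z + t • v)) 0 = fderiv ℂ g z v := by
    have := (hg.differentiableAt (closedBall_mem_nhds z hR)).hasFDerivAt.comp_hasDerivAt_of_eq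
      (0 : ℂ) (((hasDerivAt_id (0 : ℂ)).smul_const v).const_add z) (by simp)
    simpa [Function.comp_def] using this.deriv
  calc ‖fderiv ℂ g z v‖ ≤ C / ρ := hderiv ▸ Complex.norm_deriv_le_of_forall_mem_sphere_norm_le
        hρ hd fun t ht => hC _ (hline (sphere_subset_closedBall ht))
    _ = C / R * ‖v‖ := by rw [div_div_eq_mul_div, mul_div_right_comm]

theorem mem_image_closedBall_of_norm_sub_self_le [CompleteSpace E] {f : E → E} {y : E} {r : ℝ}
    (hr : 0 < r) (hf : DifferentiableOn ℂ f (closedBall y (2 * r)))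
    (hclose : ∀ z ∈ closedBall y (2 * r), ‖f z - z‖ ≤ r / 2) :
    y ∈ f '' closedBall y r := by
  have hlip : LipschitzOnWith (1 / 2) (f - id) (closedBall y r) := by
    refine (convex_closedBall y r).lipschitzOnWith_of_nnnorm_fderiv_le (𝕜 := ℂ)
      (fun x hx => ?_) (fun x hx => ?_)
    · have hx2 : closedBall y (2 * r) ∈ 𝓝 x :=
        closedBall_mem_nhds_of_mem (mem_closedBall.mp hx |>.trans_lt (by linarith))
      exact (hf.sub differentiableOn_id).differentiableAt hx2
    · have hsub : closedBall x r ⊆ closedBall y (2 * r) :=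
        closedBall_subset_closedBall' (by linarith [mem_closedBall.mp hx])
      rw [← NNReal.coe_le_coe, coe_nnnorm]
      calc ‖fderiv ℂ (f - id) x‖ ≤ r / 2 / r :=
            Complex.norm_fderiv_le_of_forall_mem_closedBall_norm_le hr
              ((hf.mono hsub).sub differentiableOn_id) fun w hw => hclose w (hsub hw)
        _ = ((1 / 2 : NNReal) : ℝ) := by field_simp; norm_num
  have happrox : ApproximatesLinearOn f (ContinuousLinearMap.id ℂ E) (closedBall y r) (1 / 2) :=
    ApproximatesLinearOn.approximatesLinearOn_iff_lipschitzOnWith.mpr hlip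
  let idInv : (ContinuousLinearMap.id ℂ E).NonlinearRightInverse :=
    ⟨id, 1, fun _ => by simp, fun _ => rfl⟩
  refine happrox.surjOn_closedBall_of_nonlinearRightInverse idInv hr.le subset_rfl ?_
  rw [mem_closedBall, dist_eq_norm, norm_sub_rev]
  convert hclose y (mem_closedBall_self (by positivity)) using 1
  norm_num
  ring

theorem injOn_of_tendsto_iterate {α : Type*} [TopologicalSpace α] [T2Space α] {f : α → α}
    {s : Set α} {p : ℕ → ℕ} (hp : Tendsto p atTop atTop)
    (hconv : ∀ x ∈ s, Tendsto (fun j => f^[p j] x) atTop (𝓝 x)) : InjOn f s := by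
  intro a ha b hb hab
  have horbit : (fun j => f^[p j] a) =ᶠ[atTop] fun j => f^[p j] b := by
    filter_upwards [hp.eventually_ge_atTop 1] with j hj
    obtain ⟨n, hn⟩ := Nat.exists_eq_add_of_le' hj
    rw [hn, Function.iterate_succ_apply, Function.iterate_succ_apply, hab]
  exact tendsto_nhds_unique ((hconv a ha).congr' horbit) (hconv b hb)

theorem surjOn_of_tendstoLocallyUniformlyOn_iterate [ProperSpace E] {φ : E → E} {Ω : Set E}
    (hΩ : IsOpen Ω) (hφ : DifferentiableOn ℂ φ Ω) (hmaps : MapsTo φ Ω Ω) {p : ℕ → ℕ}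
    (hp : Tendsto p atTop atTop)
    (hconv : TendstoLocallyUniformlyOn (fun j => φ^[p j]) id atTop Ω) : SurjOn φ Ω Ω := by
  intro y hy
  obtain ⟨r, hr, hball⟩ : ∃ r > 0, closedBall y (2 * r) ⊆ Ω := by
    obtain ⟨ε, hε, hεΩ⟩ := nhds_basis_closedBall.mem_iff.mp (hΩ.mem_nhds hy)
    exact ⟨ε / 2, by positivity, by rwa [mul_div_cancel₀ _ two_ne_zero]⟩
  have hunif := (tendstoLocallyUniformlyOn_iff_forall_isCompact hΩ).mp hconv _ hball
    (isCompact_closedBall y _)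
  obtain ⟨j, hj, hclose⟩ := ((hp.eventually_ge_atTop 1).and
    (Metric.tendstoUniformlyOn_iff.mp hunif (r / 2) (by positivity))).exists
  obtain ⟨n, hn⟩ := Nat.exists_eq_add_of_le' hj
  obtain ⟨z, hz, hzy⟩ := mem_image_closedBall_of_norm_sub_self_le hr
    ((hφ.iterate hmaps _).mono hball) fun w hw => by
      rw [← dist_eq_norm, dist_comm]
      exact (hclose w hw).le
  refine ⟨φ^[n] z, hmaps.iterate n (hball (closedBall_subset_closedBall (by linarith) hz)), ?_⟩
  rw [← hzy, hn, Function.iterate_succ_apply']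

theorem stmt_17_general {k : ℕ} (φ : Ck k → Ck k)
    (hhol : Differentiable ℂ φ)
    (Ω : Set (Ck k)) (hΩopen : IsOpen Ω)
    (hinv : φ '' Ω ⊆ Ω)
    (p : ℕ → ℕ) (hp : StrictMono p)
    (hconv : TendstoLocallyUniformlyOn (fun j => φ^[p j]) id atTop Ω) :
    Set.BijOn φ Ω Ω := by
  have hmaps : MapsTo φ Ω Ω := mapsTo_iff_image_subset.mpr hinv
  refine ⟨hmaps, injOn_of_tendsto_iterate hp.tendsto_atTop fun x hx => ?_,
    surjOn_of_tendstoLocallyUniformlyOn_iterate hΩopen hhol.differentiableOn hmaps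
      hp.tendsto_atTop hconv⟩
  simpa using hconv.tendsto_at hx

/-- If a subsequence `(φ^{p_j})` of iterates of a holomorphic map `φ`, with `p_j → ∞`,
converges locally uniformly to the identity on a forward-invariant connected open set
`Ω`, then `φ` is an automorphism of `Ω`. -/
theorem stmt_17 {k : ℕ} (hk : 2 ≤ k) (φ : Ck k → Ck k)
    (hhol : Differentiable ℂ φ)
    (Ω : Set (Ck k)) (hΩopen : IsOpen Ω) (hΩconn : IsConnected Ω)
    (hinv : φ '' Ω ⊆ Ω)
    (p : ℕ → ℕ) (hp : StrictMono p)
    (hconv : TendstoLocallyUniformlyOn (fun j => φ^[p j]) id atTop Ω) :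
    Set.BijOn φ Ω Ω :=
  stmt_17_general φ hhol Ω hΩopen hinv p hp hconv
end
end

section
/- Let k ≥ 2 and let G = ⟨φ_1, …, φ_m⟩ be a semigroup generated by finitely many volume-preserving biholomorphisms of ℂ^k (holomorphic automorphisms of ℂ^k whose complex Jacobian determinant has modulus 1 at every point). Let Ω be a Fatou component of G that is invariant, i.e., φ(Ω) ⊆ Ω for every φ ∈ G. Then either Ω is recurrent, or there exists a sequence (φ_n) in G that diverges uniformly to infinity on compact subsets of Ω. -/
open Set Filter Metric Topology

noncomputable section

/-!
If `Ω` is not recurrent, some sequence `gₙ` in `G` has no orbit clustering inside `Ω`. Near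
each point of `Ω` the Fatou property then leaves only one option for subsequences of `gₙ`:
converging uniformly on a small ball `B` to some `h` would push the sets `gₙ(B) ⊆ Ω` into ever
thinner neighbourhoods of the compact set `h(B)`, which lies outside `Ω`; since the `gₙ`
preserve volume, this contradicts `vol B > 0`. So every subsequence has a further subsequence
diverging uniformly on `B`. A diagonal argument over finitely many balls gives divergence on
any compact subset of `Ω`, and an exhaustion of `Ω` by compact sets assembles a single sequence
diverging on all of them.
-/

open MeasureTheory

theorem addHaar_image_eq_of_norm_det_fderiv_eq_one {E : Type*} [NormedAddCommGroup E]
    [NormedSpace ℂ E] [FiniteDimensional ℂ E] [MeasurableSpace E] [BorelSpace E]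
    (μ : Measure E) [μ.IsAddHaarMeasure] {f : E → E} (hf : Differentiable ℂ f)
    (hinj : Function.Injective f) (hdet : ∀ x, ‖LinearMap.det (fderiv ℂ f x : E →ₗ[ℂ] E)‖ = 1)
    {s : Set E} (hs : MeasurableSet s) : μ (f '' s) = μ s := by
  have hderiv : ∀ x ∈ s, HasFDerivWithinAt f ((fderiv ℂ f x).restrictScalars ℝ) s x :=
    fun x _ => ((hf x).hasFDerivAt.restrictScalars ℝ).hasFDerivWithinAt
  have hdetℝ : ∀ x, |((fderiv ℂ f x).restrictScalars ℝ : E →L[ℝ] E).det| = 1 := fun x => by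
    rw [ContinuousLinearMap.det, ContinuousLinearMap.coe_restrictScalars,
      LinearMap.det_restrictScalars, Algebra.norm_complex_apply, Complex.normSq_eq_norm_sq,
      hdet, one_pow, abs_one]
  rw [← lintegral_abs_det_fderiv_eq_addHaar_image μ hs hderiv hinj.injOn]
  simp [hdetℝ]

theorem jacDet_comp {k : ℕ} {f g : Ck k → Ck k} (hf : Differentiable ℂ f)
    (hg : Differentiable ℂ g) (z : Ck k) :
    jacDet (f ∘ g) z = jacDet f (g z) * jacDet g z := by
  rw [jacDet, fderiv_comp z (hf (g z)) (hg z)]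
  exact LinearMap.det_comp _ _

def IsUnimodularEmbedding {k : ℕ} (f : Ck k → Ck k) : Prop :=
  Differentiable ℂ f ∧ Function.Injective f ∧ ∀ z, ‖jacDet f z‖ = 1

namespace IsUnimodularEmbedding

variable {k : ℕ} {f g : Ck k → Ck k}

theorem comp (hf : IsUnimodularEmbedding f) (hg : IsUnimodularEmbedding g) :
    IsUnimodularEmbedding (f ∘ g) :=
  ⟨hf.1.comp hg.1, hf.2.1.comp hg.2.1, fun z => by
    rw [jacDet_comp hf.1 hg.1, norm_mul, hf.2.2, hg.2.2, one_mul]⟩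

theorem volume_image (hf : IsUnimodularEmbedding f) {s : Set (Ck k)} (hs : MeasurableSet s) :
    volume (f '' s) = volume s :=
  addHaar_image_eq_of_norm_det_fderiv_eq_one volume hf.1 hf.2.1 hf.2.2 hs

end IsUnimodularEmbedding

theorem SemigroupGen.isUnimodularEmbedding {k : ℕ} {S : Set (Ck k → Ck k)}
    (hS : ∀ f ∈ S, IsUnimodularEmbedding f) {f : Ck k → Ck k} (hf : SemigroupGen S f) :
    IsUnimodularEmbedding f := by
  induction hf with
  | base hf => exact hS _ hf
  | comp _ _ ihf ihg => exact ihf.comp ihg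

theorem isOpen_fatouSet {k : ℕ} (G : Set (Ck k → Ck k)) : IsOpen (FatouSet G) :=
  isOpen_iff_forall_mem_open.mpr fun _ ⟨U, hU, hzU, hUG⟩ =>
    ⟨U, fun _ hw => ⟨U, hU, hw, hUG⟩, hU, hzU⟩

theorem IsFatouComponent.isOpen {k : ℕ} {G : Set (Ck k → Ck k)} {Ω : Set (Ck k)}
    (hΩ : IsFatouComponent G Ω) : IsOpen Ω := by
  obtain ⟨z, -, rfl⟩ := hΩ
  exact (isOpen_fatouSet G).connectedComponentIn

theorem IsFatouComponent.subset_fatouSet {k : ℕ} {G : Set (Ck k → Ck k)} {Ω : Set (Ck k)}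
    (hΩ : IsFatouComponent G Ω) : Ω ⊆ FatouSet G := by
  obtain ⟨z, -, rfl⟩ := hΩ
  exact connectedComponentIn_subset _ _

theorem measure_le_measure_inter_closure_of_tendstoUniformlyOn {X ι : Type*}
    [PseudoMetricSpace X] [ProperSpace X] [MeasurableSpace X] [OpensMeasurableSpace X]
    {μ : Measure X} [IsFiniteMeasureOnCompacts μ] {l : Filter ι} [l.NeBot] {g : ι → X → X}
    {h : X → X} {B Ω : Set X} (hΩ : MeasurableSet Ω) (hμ : ∀ i, μ B ≤ μ (g i '' B))
    (hmaps : ∀ i, MapsTo (g i) B Ω) (hconv : TendstoUniformlyOn g h l B)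
    (hbdd : Bornology.IsBounded (h '' B)) :
    μ B ≤ μ (Ω ∩ closure (h '' B)) := by
  have hlim : Tendsto (fun δ => μ (Ω ∩ thickening δ (h '' B))) (𝓝[>] 0)
      (𝓝 (μ (Ω ∩ closure (h '' B)))) := by
    have hfin : (μ.restrict Ω) (thickening 1 (h '' B)) ≠ ⊤ :=
      ((Measure.restrict_apply_le _ _).trans_lt hbdd.thickening.measure_lt_top).ne
    simpa only [Measure.restrict_apply' hΩ, inter_comm] using
      tendsto_measure_thickening ⟨1, one_pos, hfin⟩
  refine ge_of_tendsto hlim ?_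
  filter_upwards [self_mem_nhdsWithin] with δ hδ
  obtain ⟨i, hi⟩ := (Metric.tendstoUniformlyOn_iff.mp hconv δ hδ).exists
  refine (hμ i).trans (measure_mono ?_)
  rintro _ ⟨w, hw, rfl⟩
  exact ⟨hmaps i hw, mem_thickening_iff.mpr ⟨h w, mem_image_of_mem h hw, by
    rw [dist_comm]; exact hi w hw⟩⟩

theorem exists_mem_of_tendstoUniformlyOn {k : ℕ} {g : ℕ → Ck k → Ck k} {h : Ck k → Ck k}
    {B Ω : Set (Ck k)} (hg : ∀ n, IsUnimodularEmbedding (g n)) (hΩ : MeasurableSet Ω)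
    (hB : IsCompact B) (hBpos : 0 < volume B) (hmaps : ∀ n, MapsTo (g n) B Ω)
    (hconv : TendstoUniformlyOn g h atTop B) : ∃ w ∈ B, h w ∈ Ω := by
  by_contra! hout
  have hcont : ContinuousOn h B :=
    hconv.continuousOn (Frequently.of_forall fun n => (hg n).1.continuous.continuousOn)
  have hhB : IsCompact (h '' B) := hB.image_of_continuousOn hcont
  have hle := measure_le_measure_inter_closure_of_tendstoUniformlyOn hΩ
    (fun n => ((hg n).volume_image hB.measurableSet).ge) hmaps hconv hhB.isBounded
  have hdisj : Ω ∩ h '' B = ∅ :=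
    eq_empty_iff_forall_notMem.mpr fun _ ⟨hΩ', w, hw, hwz⟩ => hout w hw (hwz ▸ hΩ')
  rw [hhB.isClosed.closure_eq, hdisj, measure_empty] at hle
  exact hBpos.ne' (le_zero_iff.mp hle)

def SubseqDivergesOn {X E : Type*} [Norm E] (f : ℕ → X → E) (V : Set X) : Prop :=
  ∀ t : ℕ → ℕ, StrictMono t → ∃ s : ℕ → ℕ, StrictMono s ∧
    ∀ R > (0 : ℝ), ∀ᶠ n in atTop, ∀ w ∈ V, R < ‖f (t (s n)) w‖

namespace SubseqDivergesOn

variable {X E : Type*} [Norm E] {f : ℕ → X → E} {V W : Set X}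

theorem mono (hW : SubseqDivergesOn f W) (hVW : V ⊆ W) : SubseqDivergesOn f V := fun t ht =>
  (hW t ht).imp fun _ ⟨hs, hdiv⟩ =>
    ⟨hs, fun R hR => (hdiv R hR).mono fun _ hn w hw => hn w (hVW hw)⟩

theorem union (hV : SubseqDivergesOn f V) (hW : SubseqDivergesOn f W) :
    SubseqDivergesOn f (V ∪ W) := by
  intro t ht
  obtain ⟨s₁, hs₁, hV⟩ := hV t ht
  obtain ⟨s₂, hs₂, hW⟩ := hW (t ∘ s₁) (ht.comp hs₁)
  refine ⟨s₁ ∘ s₂, hs₁.comp hs₂, fun R hR => ?_⟩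
  filter_upwards [hs₂.tendsto_atTop.eventually (hV R hR), hW R hR] with n hVn hWn
  rintro w (hw | hw)
  exacts [hVn w hw, hWn w hw]

end SubseqDivergesOn

theorem IsCompact.subseqDivergesOn {X E : Type*} [TopologicalSpace X] [Norm E]
    {f : ℕ → X → E} {K : Set X} (hK : IsCompact K)
    (hloc : ∀ x ∈ K, ∃ V ∈ 𝓝 x, SubseqDivergesOn f V) : SubseqDivergesOn f K :=
  hK.induction_on
    (fun _ _ => ⟨id, strictMono_id, fun _ _ => .of_forall fun _ _ => False.elim⟩)
    (fun _ _ hst hdiv => hdiv.mono hst) (fun _ _ => .union)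
    fun x hx => (hloc x hx).imp fun _ ⟨hV, hdiv⟩ => ⟨mem_nhdsWithin_of_mem_nhds hV, hdiv⟩

theorem exists_nhds_subseqDivergesOn {k : ℕ} {G : Set (Ck k → Ck k)} {Ω : Set (Ck k)}
    (hG : ∀ ψ ∈ G, IsUnimodularEmbedding ψ) (hinv : ∀ ψ ∈ G, ψ '' Ω ⊆ Ω) (hΩ : IsOpen Ω)
    {g : ℕ → Ck k → Ck k} (hgG : ∀ n, g n ∈ G)
    (hg : ∀ s : ℕ → ℕ, StrictMono s → ∀ p ∈ Ω, ∀ p₀ ∈ Ω,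
      ¬Tendsto (fun n => g (s n) p) atTop (𝓝 p₀))
    {z : Ck k} (hzΩ : z ∈ Ω) (hzF : z ∈ FatouSet G) : ∃ V ∈ 𝓝 z, SubseqDivergesOn g V := by
  obtain ⟨U, hU, hzU, hUG⟩ := hzF
  obtain ⟨r, hr, hB⟩ := nhds_basis_closedBall.mem_iff.mp ((hU.inter hΩ).mem_nhds ⟨hzU, hzΩ⟩)
  have hBc : IsCompact (closedBall z r) := isCompact_closedBall z r
  have hBU : closedBall z r ⊆ U := fun _ hw => (hB hw).1
  refine ⟨closedBall z r, closedBall_mem_nhds z hr, fun t ht => ?_⟩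
  obtain ⟨s, hs, ⟨h, hconv⟩ | hdiv⟩ := hUG (fun n => g (t n)) fun n => hgG (t n)
  · have hunif := (tendstoLocallyUniformlyOn_iff_forall_isCompact hU).mp hconv _ hBU hBc
    obtain ⟨w, hw, hwΩ⟩ := exists_mem_of_tendstoUniformlyOn (fun n => hG _ (hgG _))
      hΩ.measurableSet hBc (measure_closedBall_pos volume z hr)
      (fun n _ hw => hinv _ (hgG _) ⟨_, (hB hw).2, rfl⟩) hunif
    exact absurd (hunif.tendsto_at hw) (hg (t ∘ s) (ht.comp hs) w (hB hw).2 _ hwΩ)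
  · exact ⟨s, hs, fun R hR => hdiv _ hBU hBc R hR⟩

theorem IsOpen.exists_divergesUniformlyOn {k : ℕ} {G : Set (Ck k → Ck k)} {Ω : Set (Ck k)}
    (hΩ : IsOpen Ω)
    (hfar : ∀ K ⊆ Ω, IsCompact K → ∀ R > (0 : ℝ), ∃ ψ ∈ G, ∀ w ∈ K, R < ‖ψ w‖) :
    ∃ g : ℕ → Ck k → Ck k, (∀ j, g j ∈ G) ∧ DivergesUniformlyOn g Ω := by
  have := hΩ.locallyCompactSpace
  let K := CompactExhaustion.choice Ω
  choose g hgG hg using fun n : ℕ => hfar ((↑) '' K n) (Subtype.coe_image_subset _ _)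
    ((K.isCompact n).image continuous_subtype_val) (n + 1) n.cast_add_one_pos
  refine ⟨g, hgG, fun L hLΩ hL R _ => ?_⟩
  obtain ⟨n₀, hn₀⟩ := K.exists_superset_of_isCompact
    (Subtype.isCompact_iff.mpr (by rwa [Subtype.image_preimage_coe, inter_eq_right.mpr hLΩ]))
  filter_upwards [eventually_ge_atTop n₀, eventually_gt_atTop ⌈R⌉₊] with n hn hnR w hw
  have hwK : (⟨w, hLΩ hw⟩ : Ω) ∈ K n := K.subset hn (hn₀ hw)
  calc R ≤ ⌈R⌉₊ := Nat.le_ceil R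
    _ < n + 1 := by exact_mod_cast hnR.trans (Nat.lt_succ_self n)
    _ < ‖g n w‖ := hg n w ⟨_, hwK, rfl⟩

theorem stmt_18_general {k m : ℕ} (φ : Fin m → Ck k → Ck k)
    (hvol : ∀ i, IsHoloAut (φ i) ∧ ∀ z, ‖jacDet (φ i) z‖ = 1)
    (Ω : Set (Ck k)) (hΩ : IsFatouComponent (GenSet (Set.range φ)) Ω)
    (hinv : ∀ ψ ∈ GenSet (Set.range φ), ψ '' Ω ⊆ Ω) :
    Recurrent (GenSet (Set.range φ)) Ω ∨
      ∃ g : ℕ → Ck k → Ck k, (∀ j, g j ∈ GenSet (Set.range φ)) ∧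
        DivergesUniformlyOn g Ω := by
  have hG : ∀ ψ ∈ GenSet (Set.range φ), IsUnimodularEmbedding ψ := by
    refine fun ψ hψ => SemigroupGen.isUnimodularEmbedding ?_ hψ
    rintro _ ⟨i, rfl⟩
    obtain ⟨⟨hdiff, _, -, hleft, -⟩, hjac⟩ := hvol i
    exact ⟨hdiff, hleft.injective, hjac⟩
  refine or_iff_not_imp_left.mpr fun hrec => hΩ.isOpen.exists_divergesUniformlyOn ?_
  simp only [Recurrent, not_forall, not_exists, not_and, exists_prop] at hrec
  obtain ⟨g, hgG, hg⟩ := hrec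
  intro K hKΩ hK R hR
  obtain ⟨s, -, hdiv⟩ := hK.subseqDivergesOn (fun z hz => exists_nhds_subseqDivergesOn hG hinv
    hΩ.isOpen hgG hg (hKΩ hz) (hΩ.subset_fatouSet (hKΩ hz))) id strictMono_id
  obtain ⟨n, hn⟩ := (hdiv R hR).exists
  exact ⟨g (s n), hgG _, hn⟩

/-- If `Ω` is an invariant Fatou component of a semigroup generated by finitely many
volume-preserving biholomorphisms of `ℂ^k`, then either `Ω` is recurrent or some
sequence in `G` diverges uniformly to infinity on compact subsets of `Ω`. -/
theorem stmt_18 {k m : ℕ} (hk : 2 ≤ k) (φ : Fin m → Ck k → Ck k)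
    (hvol : ∀ i, IsHoloAut (φ i) ∧ ∀ z, ‖jacDet (φ i) z‖ = 1)
    (Ω : Set (Ck k)) (hΩ : IsFatouComponent (GenSet (Set.range φ)) Ω)
    (hinv : ∀ ψ ∈ GenSet (Set.range φ), ψ '' Ω ⊆ Ω) :
    Recurrent (GenSet (Set.range φ)) Ω ∨
      ∃ g : ℕ → Ck k → Ck k, (∀ j, g j ∈ GenSet (Set.range φ)) ∧
        DivergesUniformlyOn g Ω :=
  stmt_18_general φ hvol Ω hΩ hinv
end
end
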